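/- arXiv:2410.10008 — 5 statements merged into one kernel-verified Lean document; each statement's English description precedes it below -/
import Mathlib

section
/- Two elements of the wreath product C₂ ≀ Sₙ are conjugate if and only if their associated signed partitions of n are equal. Consequently, the conjugacy classes of C₂ ≀ Sₙ are in bijection with the signed partitions of n (pairs (λ⁺, λ⁻) of partitions with |λ⁺| + |λ⁻| = n). -/
open scoped Classical

/-- The wreath product `G ≀ S_α`: pairs of a function `α → G` and a permutation of `α`. -/
@[ext] structure Wr (G : Type*) (α : Type*) where
  a : α → G
  p : Equiv.Perm α

namespace Wr

variable {G α : Type*} [Group G]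

instance : Mul (Wr G α) := ⟨fun x y => ⟨fun i => x.a i * y.a (x.p⁻¹ i), x.p * y.p⟩⟩
instance : One (Wr G α) := ⟨⟨fun _ => 1, 1⟩⟩
instance : Inv (Wr G α) := ⟨fun x => ⟨fun i => (x.a (x.p i))⁻¹, x.p⁻¹⟩⟩

@[simp] lemma mul_a (x y : Wr G α) : (x * y).a = fun i => x.a i * y.a (x.p⁻¹ i) := rfl
@[simp] lemma mul_p (x y : Wr G α) : (x * y).p = x.p * y.p := rfl
@[simp] lemma one_a : (1 : Wr G α).a = fun _ => 1 := rfl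
@[simp] lemma one_p : (1 : Wr G α).p = 1 := rfl
@[simp] lemma inv_a (x : Wr G α) : (x⁻¹).a = fun i => (x.a (x.p i))⁻¹ := rfl
@[simp] lemma inv_p (x : Wr G α) : (x⁻¹).p = x.p⁻¹ := rfl

instance : Group (Wr G α) where
  mul_assoc x y z := by
    ext i
    · simp [mul_assoc, Equiv.Perm.mul_apply]
    · simp [mul_assoc]
  one_mul x := by
    ext i
    · simp
    · simp
  mul_one x := by
    ext i
    · simp
    · simp
  inv_mul_cancel x := by
    ext i
    · simp
    · simp

noncomputable instance [Fintype G] [Fintype α] : Fintype (Wr G α) :=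
  Fintype.ofEquiv ((α → G) × Equiv.Perm α)
    { toFun := fun x => ⟨x.1, x.2⟩
      invFun := fun w => (w.a, w.p)
      left_inv := fun _ => rfl
      right_inv := fun _ => rfl }

end Wr

/-- The product of the `C₂`-entries of `a` over the cycle of `σ` containing `i`. -/
noncomputable def cycleProd {n : ℕ} (a : Fin n → ℤˣ) (σ : Equiv.Perm (Fin n)) (i : Fin n) : ℤˣ :=
  ∏ j ∈ Finset.univ.filter (fun j => σ.SameCycle i j), a j

/-- The number of indices lying on a cycle of `w.p` of length `k` whose cycle product is `ε`
(this is `k` times the number of parts of the signed partition of `w` equal to `k` with sign `ε`). -/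
noncomputable def signedCount {n : ℕ} (w : Wr ℤˣ (Fin n)) (k : ℕ) (ε : ℤˣ) : ℕ :=
  (Finset.univ.filter (fun i =>
    (Finset.univ.filter (fun j => w.p.SameCycle i j)).card = k ∧ cycleProd w.a w.p i = ε)).card

/-- A signed partition of `n`: a pair of partitions of total size `n`. -/
def SignedPartition (n : ℕ) : Type :=
  {pq : (Σ c : ℕ, c.Partition) × (Σ d : ℕ, d.Partition) // pq.1.1 + pq.2.1 = n}

/-!
For an abelian group `G`, label each cycle of an element `(a, σ)` of `G ≀ S_α` by its length and
the product of the entries of `a` along it. Conjugating by a permutation only renames the points,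
and conjugating by a diagonal element `(d, 1)` multiplies `a` by the coboundary
`i ↦ d i * (d (σ⁻¹ i))⁻¹`, whose product along every cycle is trivial; so the multiset of
labelled cycles is a conjugacy invariant. Conversely, if two elements have the same labelled
cycles, a bijection between their cycles preserving the labels yields a permutation conjugating
one permutation part into the other, after which the two functions differ by a function with
trivial cycle products, and such a function is a coboundary: take partial products along each
cycle. Every multiset of labelled lengths summing to `|α|` occurs, realised by rotating one block
per part. For `G = C₂ = ℤˣ` the labelled multisets are exactly the signed partitions.
-/

open Equiv Finset Function

theorem Fintype.exists_equiv_of_map_univ_eq {ι κ γ : Type*} [Fintype ι] [Fintype κ]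
    [DecidableEq γ] {f : ι → γ} {g : κ → γ}
    (h : Finset.univ.val.map f = Finset.univ.val.map g) : ∃ e : ι ≃ κ, ∀ i, g (e i) = f i := by
  have hcard : ∀ c, Fintype.card {i // f i = c} = Fintype.card {k // g k = c} := fun c => by
    have := congrArg (Multiset.count c) h
    simp only [Multiset.count_map, eq_comm (a := c)] at this
    rw [Fintype.card_subtype, Fintype.card_subtype]
    exact this
  exact ⟨Equiv.ofFiberEquiv fun c => Fintype.equivOfCardEq (hcard c), Equiv.ofFiberEquiv_map _⟩

namespace Equiv.Perm

variable {α β : Type*}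

theorem pow_apply_eq_pow_apply_iff_modEq [Finite α] (σ : Perm α) {b : α} {m m' : ℕ} :
    (σ ^ m) b = (σ ^ m') b ↔ m ≡ m' [MOD minimalPeriod σ b] := by
  have hpos := minimalPeriod_pos_of_mem_periodicPts (σ.injective.mem_periodicPts b)
  rw [coe_pow, coe_pow, ← iterate_mod_minimalPeriod_eq, ← iterate_mod_minimalPeriod_eq (n := m'),
    iterate_eq_iterate_iff_of_lt_minimalPeriod (Nat.mod_lt _ hpos) (Nat.mod_lt _ hpos)]
  rfl

theorem injOn_pow_apply_range_minimalPeriod [Finite α] (σ : Perm α) (b : α) :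
    Set.InjOn (fun m => (σ ^ m) b) (range (minimalPeriod σ b)) := by
  intro m hm m' hm' h
  rw [coe_range, Set.mem_Iio] at hm hm'
  have := (σ.pow_apply_eq_pow_apply_iff_modEq).1 h
  rwa [Nat.ModEq, Nat.mod_eq_of_lt hm, Nat.mod_eq_of_lt hm'] at this

theorem sameCycle_permCongr_apply (e : α ≃ β) (σ : Perm α) {i j : α} :
    (e.permCongr σ).SameCycle (e i) (e j) ↔ σ.SameCycle i j := by
  refine exists_congr fun z => ?_
  have hz : e.permCongr σ ^ z = e.permCongr (σ ^ z) := by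
    simpa using (map_zpow e.permCongrHom σ z).symm
  rw [hz, permCongr_apply, symm_apply_apply, e.apply_eq_iff_eq]

theorem sameCycle_finRotate {k : ℕ} (i j : Fin k) : (finRotate k).SameCycle i j := by
  rcases lt_or_ge k 2 with hk | hk
  · obtain rfl : i = j := Fin.subsingleton_iff_le_one.2 (by omega) |>.elim i j
    exact SameCycle.refl _ _
  · have hmem : ∀ x, finRotate k x ≠ x := fun x => by
      rw [← mem_support, support_finRotate_of_le hk]
      exact mem_univ x
    exact (isCycle_finRotate_of_le hk).sameCycle (hmem i) (hmem j)

section Sigma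

variable {ι : Type*} {κ : ι → Type*} (F : ∀ b, Perm (κ b))

theorem sigmaCongrRight_zpow_apply (z : ℤ) (t : Σ b, κ b) :
    (sigmaCongrRight F ^ z) t = ⟨t.1, (F t.1 ^ z) t.2⟩ := by
  rw [show sigmaCongrRight F ^ z = sigmaCongrRight (F ^ z) from
    (map_zpow (sigmaCongrRightHom κ) F z).symm]
  rfl

theorem SameCycle.fst_eq_of_sigmaCongrRight {s t : Σ b, κ b}
    (h : (sigmaCongrRight F).SameCycle s t) : s.1 = t.1 := by
  obtain ⟨z, rfl⟩ := h
  rw [sigmaCongrRight_zpow_apply]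

theorem sameCycle_sigmaCongrRight_mk_mk {b : ι} {i j : κ b} :
    (sigmaCongrRight F).SameCycle ⟨b, i⟩ ⟨b, j⟩ ↔ (F b).SameCycle i j := by
  refine exists_congr fun z => ?_
  rw [sigmaCongrRight_zpow_apply, Sigma.mk.inj_iff]
  simp

end Sigma

/-- The cycles of `σ`, fixed points included. -/
abbrev Cycles (σ : Perm α) : Type _ := Quotient (SameCycle.setoid σ)

def Cycles.mk (σ : Perm α) (i : α) : σ.Cycles := Quotient.mk _ i

theorem Cycles.mk_eq_mk {σ : Perm α} {i j : α} :
    Cycles.mk σ i = Cycles.mk σ j ↔ σ.SameCycle i j :=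
  Quotient.eq

@[simp] theorem Cycles.mk_out {σ : Perm α} (q : σ.Cycles) : Cycles.mk σ q.out = q :=
  Quotient.out_eq q

theorem Cycles.sameCycle_out_mk (σ : Perm α) (i : α) : σ.SameCycle (Cycles.mk σ i).out i :=
  Quotient.mk_out (s := SameCycle.setoid σ) i

@[simp] theorem Cycles.mk_pow_apply (σ : Perm α) (m : ℕ) (i : α) :
    Cycles.mk σ ((σ ^ m) i) = Cycles.mk σ i :=
  Cycles.mk_eq_mk.2 (sameCycle_pow_left.2 (SameCycle.refl σ i))

@[simp] theorem Cycles.mk_apply (σ : Perm α) (i : α) : Cycles.mk σ (σ i) = Cycles.mk σ i := by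
  simpa using Cycles.mk_pow_apply σ 1 i

theorem exists_semiconj_of_equiv_cycles [Finite α] (σ τ : Perm α) (β : σ.Cycles ≃ τ.Cycles)
    (hβ : ∀ q, minimalPeriod τ (β q).out = minimalPeriod σ q.out) :
    ∃ π : Perm α, (∀ i, π (σ i) = τ (π i)) ∧ ∀ i, Cycles.mk τ (π i) = β (Cycles.mk σ i) := by
  choose m hm using fun i => (Cycles.sameCycle_out_mk σ i).exists_nat_pow_eq
  have transfer : ∀ q k k',
      (σ ^ k) q.out = (σ ^ k') q.out ↔ (τ ^ k) (β q).out = (τ ^ k') (β q).out := fun q k k' => by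
    rw [pow_apply_eq_pow_apply_iff_modEq, pow_apply_eq_pow_apply_iff_modEq, hβ]
  -- matched cycles have the same period, so by `transfer` the choice of exponents is harmless
  set f : α → α := fun i => (τ ^ m i) (β (Cycles.mk σ i)).out
  have hf : ∀ i, Cycles.mk τ (f i) = β (Cycles.mk σ i) := fun i => by simp [f]
  have hinj : Injective f := by
    intro i j hij
    have hq : Cycles.mk σ j = Cycles.mk σ i := β.injective (by rw [← hf, ← hf, hij])
    have hmj := hm j
    rw [hq] at hmj
    rw [← hm i, ← hmj, transfer]
    simpa only [f, hq] using hij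
  refine ⟨Equiv.ofBijective f (Finite.injective_iff_bijective.1 hinj), fun i => ?_, hf⟩
  have hmσ := hm (σ i)
  rw [Cycles.mk_apply] at hmσ
  show (τ ^ m (σ i)) (β (Cycles.mk σ (σ i))).out = τ ((τ ^ m i) (β (Cycles.mk σ i)).out)
  rw [Cycles.mk_apply, ← mul_apply, ← pow_succ', ← transfer, hmσ, pow_succ', mul_apply, hm]

variable [Fintype α] [DecidableEq α]

def sameCycleFinset (σ : Perm α) (i : α) : Finset α := {j | σ.SameCycle i j}

@[simp] theorem mem_sameCycleFinset {σ : Perm α} {i j : α} :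
    j ∈ σ.sameCycleFinset i ↔ σ.SameCycle i j := by
  simp [sameCycleFinset]

theorem SameCycle.sameCycleFinset_eq {σ : Perm α} {i j : α} (h : σ.SameCycle i j) :
    σ.sameCycleFinset i = σ.sameCycleFinset j := by
  ext t
  simp only [mem_sameCycleFinset]
  exact ⟨h.symm.trans, h.trans⟩

theorem Cycles.filter_mk_eq (σ : Perm α) (q : σ.Cycles) :
    ({i | Cycles.mk σ i = q} : Finset α) = σ.sameCycleFinset q.out := by
  ext i
  simp only [mem_filter, mem_univ, true_and, mem_sameCycleFinset]
  rw [sameCycle_comm, ← Cycles.mk_eq_mk, Cycles.mk_out]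

theorem image_pow_apply_range_minimalPeriod (σ : Perm α) (b : α) :
    (range (minimalPeriod σ b)).image (fun m => (σ ^ m) b) = σ.sameCycleFinset b := by
  ext j
  simp only [mem_image, mem_range, mem_sameCycleFinset]
  constructor
  · rintro ⟨m, -, rfl⟩
    exact sameCycle_pow_right.2 (SameCycle.refl σ b)
  · intro h
    obtain ⟨m, rfl⟩ := h.exists_nat_pow_eq
    refine ⟨m % minimalPeriod σ b, Nat.mod_lt _ ?_, ?_⟩
    · exact minimalPeriod_pos_of_mem_periodicPts (σ.injective.mem_periodicPts b)
    · exact (σ.pow_apply_eq_pow_apply_iff_modEq).2 (Nat.mod_modEq _ _)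

theorem card_sameCycleFinset (σ : Perm α) (b : α) :
    #(σ.sameCycleFinset b) = minimalPeriod σ b := by
  rw [← image_pow_apply_range_minimalPeriod,
    card_image_of_injOn (injOn_pow_apply_range_minimalPeriod σ b), card_range]

theorem prod_sameCycleFinset {M : Type*} [CommMonoid M] (σ : Perm α) (b : α) (f : α → M) :
    ∏ j ∈ σ.sameCycleFinset b, f j = ∏ m ∈ range (minimalPeriod σ b), f ((σ ^ m) b) := by
  rw [← image_pow_apply_range_minimalPeriod,
    prod_image (injOn_pow_apply_range_minimalPeriod σ b)]

theorem prod_sameCycleFinset_inv_apply {M : Type*} [CommMonoid M]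
    (σ : Perm α) (i : α) (f : α → M) :
    ∏ j ∈ σ.sameCycleFinset i, f (σ⁻¹ j) = ∏ j ∈ σ.sameCycleFinset i, f j :=
  prod_equiv σ⁻¹ (fun j => by simp) fun _ _ => rfl

theorem exists_apply_eq_mul_of_prod_sameCycleFinset_eq_one {G : Type*} [CommGroup G]
    (σ : Perm α) (g : α → G) (hg : ∀ i, ∏ j ∈ σ.sameCycleFinset i, g j = 1) :
    ∃ d : α → G, ∀ i, d (σ i) = d i * g (σ i) := by
  choose m hm using fun i => (Cycles.sameCycle_out_mk σ i).exists_nat_pow_eq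
  -- `d i` is the product of `g` along the path from the base point of the cycle to `i`; it does
  -- not depend on the path, since a full turn contributes the cycle product, which is trivial
  set P : α → ℕ → G := fun b k => ∏ t ∈ range k, g ((σ ^ (t + 1)) b)
  have hper : ∀ b, Periodic (P b) (minimalPeriod σ b) := by
    intro b k
    have hfull := hg ((σ ^ (k + 1)) b)
    have hp : minimalPeriod σ ((σ ^ (k + 1)) b) = minimalPeriod σ b := by
      rw [coe_pow]
      exact minimalPeriod_apply_iterate (σ.injective.mem_periodicPts b) _
    rw [prod_sameCycleFinset, hp] at hfull
    simp only [P, prod_range_add, mul_eq_left]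
    convert hfull using 2 with t
    rw [← mul_apply, ← pow_add]
    ring_nf
  have hwd : ∀ b k k', (σ ^ k) b = (σ ^ k') b → P b k = P b k' := fun b k k' h => by
    rw [← (hper b).map_mod_nat k, ← (hper b).map_mod_nat k',
      (σ.pow_apply_eq_pow_apply_iff_modEq).1 h]
  refine ⟨fun i => P (Cycles.mk σ i).out (m i), fun i => ?_⟩
  have hmσ := hm (σ i)
  simp only [Cycles.mk_apply] at hmσ ⊢
  rw [hwd _ (m (σ i)) (m i + 1) (by rw [hmσ, pow_succ', mul_apply, hm])]
  simp only [P, prod_range_succ]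
  rw [pow_succ', mul_apply, hm]

theorem sameCycleFinset_sigmaCongrRight_finRotate {ι : Type*} [Fintype ι] [DecidableEq ι]
    (k : ι → ℕ) (b : ι) (i : Fin (k b)) :
    (sigmaCongrRight fun b => finRotate (k b)).sameCycleFinset ⟨b, i⟩ =
      univ.map (Embedding.sigmaMk b) := by
  ext ⟨b', j⟩
  simp only [mem_sameCycleFinset, mem_map, mem_univ, true_and, Embedding.sigmaMk_apply]
  constructor
  · intro h
    obtain rfl : b = b' := SameCycle.fst_eq_of_sigmaCongrRight _ h
    exact ⟨j, rfl⟩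
  · rintro ⟨j, hj⟩
    cases hj
    exact (sameCycle_sigmaCongrRight_mk_mk _).2 (sameCycle_finRotate i j)

end Equiv.Perm

namespace Wr

open Perm

variable {G α β : Type*}

section Group

variable [Group G]

def relabel (e : α ≃ β) (w : Wr G α) : Wr G β := ⟨w.a ∘ e.symm, e.permCongr w.p⟩

theorem relabel_eq_conj (π : Perm α) (w : Wr G α) :
    relabel π w = ⟨fun _ => 1, π⟩ * w * ⟨fun _ => 1, π⟩⁻¹ := by
  ext i <;> simp [relabel, Perm.mul_apply]

theorem diag_conj (d : α → G) (w : Wr G α) :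
    ⟨d, 1⟩ * w * ⟨d, 1⟩⁻¹ = (⟨fun i => d i * w.a i * (d (w.p⁻¹ i))⁻¹, w.p⟩ : Wr G α) := by
  ext i <;> simp

theorem conj_eq_diag_conj_relabel (c w : Wr G α) :
    c * w * c⁻¹ = ⟨c.a, 1⟩ * relabel c.p w * ⟨c.a, 1⟩⁻¹ := by
  have hc : c = ⟨c.a, 1⟩ * ⟨fun _ => 1, c.p⟩ := by ext i <;> simp
  conv_lhs => rw [hc]
  rw [relabel_eq_conj]
  group

end Group

variable [CommGroup G] [Fintype α] [DecidableEq α] [Fintype β] [DecidableEq β]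

def cycleData (w : Wr G α) (i : α) : ℕ × G :=
  (#(w.p.sameCycleFinset i), ∏ j ∈ w.p.sameCycleFinset i, w.a j)

noncomputable def cycleType (w : Wr G α) : Multiset (ℕ × G) :=
  univ.val.map fun q : w.p.Cycles => w.cycleData q.out

theorem cycleData_mk_out (w : Wr G α) (i : α) :
    w.cycleData (Cycles.mk w.p i).out = w.cycleData i := by
  rw [cycleData, cycleData, (Cycles.sameCycle_out_mk w.p i).sameCycleFinset_eq]

theorem cycleData_fst_pos (w : Wr G α) (i : α) : 0 < (w.cycleData i).1 :=
  card_pos.2 ⟨i, mem_sameCycleFinset.2 (SameCycle.refl _ _)⟩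

theorem fst_pos_of_mem_cycleType {w : Wr G α} {v : ℕ × G} (hv : v ∈ w.cycleType) :
    0 < v.1 := by
  obtain ⟨q, -, rfl⟩ := Multiset.mem_map.1 hv
  exact w.cycleData_fst_pos _

theorem sum_map_fst_cycleType (w : Wr G α) :
    (w.cycleType.map Prod.fst).sum = Fintype.card α := by
  rw [cycleType, Multiset.map_map]
  change ∑ q : w.p.Cycles, #(w.p.sameCycleFinset q.out) = _
  simp_rw [← Cycles.filter_mk_eq]
  rw [← card_eq_sum_card_fiberwise (fun _ _ => mem_univ _), card_univ]

theorem cycleData_relabel (e : α ≃ β) (w : Wr G α) (i : α) :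
    (relabel e w).cycleData (e i) = w.cycleData i := by
  have hS : (relabel e w).p.sameCycleFinset (e i) =
      (w.p.sameCycleFinset i).map e.toEmbedding := by
    ext j
    obtain ⟨j, rfl⟩ := e.surjective j
    simp [relabel, sameCycle_permCongr_apply]
  rw [cycleData, cycleData, hS, card_map, prod_map]
  simp [relabel]

theorem cycleData_diag_conj (d : α → G) (w : Wr G α) :
    (⟨d, 1⟩ * w * ⟨d, 1⟩⁻¹ : Wr G α).cycleData = w.cycleData := by
  ext i
  · simp [diag_conj, cycleData]
  · simp only [diag_conj, cycleData, prod_mul_distrib, prod_inv_distrib,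
      prod_sameCycleFinset_inv_apply, mul_inv_cancel_comm]

theorem isConj_of_p_eq_of_cycleData_eq {z y : Wr G α} (hp : z.p = y.p)
    (h : ∀ i, (z.cycleData i).2 = (y.cycleData i).2) : IsConj z y := by
  have hg : ∀ i, ∏ j ∈ y.p.sameCycleFinset i, y.a j * (z.a j)⁻¹ = 1 := fun i => by
    rw [prod_mul_distrib, prod_inv_distrib, mul_inv_eq_one]
    simpa only [cycleData, hp] using (h i).symm
  obtain ⟨d, hd⟩ := y.p.exists_apply_eq_mul_of_prod_sameCycleFinset_eq_one _ hg
  refine isConj_iff.2 ⟨⟨d, 1⟩, ?_⟩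
  rw [diag_conj]
  refine Wr.ext (funext fun i => ?_) hp
  have hdi := hd (y.p⁻¹ i)
  rw [← Perm.mul_apply, mul_inv_cancel, Perm.one_apply] at hdi
  show d i * z.a i * (d (z.p⁻¹ i))⁻¹ = y.a i
  rw [hp, hdi, mul_assoc (d _), mul_inv_cancel_comm, inv_mul_cancel_right]

variable [DecidableEq G]

theorem card_filter_cycleData_eq (w : Wr G α) (v : ℕ × G) :
    #{i | w.cycleData i = v} = v.1 * w.cycleType.count v := by
  have hcount : w.cycleType.count v = #{q : w.p.Cycles | w.cycleData q.out = v} := by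
    rw [cycleType, Multiset.count_map, ← filter_val]
    exact congrArg card (filter_congr fun q _ => eq_comm)
  rw [hcount, card_eq_sum_card_fiberwise (f := Cycles.mk w.p)
    (t := {q | w.cycleData q.out = v}) (fun i hi => by simpa [cycleData_mk_out] using hi),
    mul_comm]
  refine sum_const_nat fun q hq => ?_
  rw [mem_filter] at hq
  have hfiber : ({i ∈ {i | w.cycleData i = v} | Cycles.mk w.p i = q} : Finset α) =
      ({i | Cycles.mk w.p i = q} : Finset α) := by
    ext i
    simp only [mem_filter, mem_univ, true_and, and_iff_right_iff_imp]
    rintro rfl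
    rw [← cycleData_mk_out]
    exact hq.2
  rw [hfiber, Cycles.filter_mk_eq, ← hq.2]
  rfl

theorem cycleType_eq_of_card_filter_cycleData_eq (w : Wr G α) (M : Multiset (ℕ × G))
    (hM : ∀ v ∈ M, 0 < v.1) (h : ∀ v, #{i | w.cycleData i = v} = v.1 * M.count v) :
    w.cycleType = M := by
  ext v
  rcases Nat.eq_zero_or_pos v.1 with hv | hv
  · rw [Multiset.count_eq_zero.2 fun hm => (fst_pos_of_mem_cycleType hm).ne' hv,
      Multiset.count_eq_zero.2 fun hm => (hM v hm).ne' hv]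
  · exact Nat.eq_of_mul_eq_mul_left hv ((card_filter_cycleData_eq w v).symm.trans (h v))

theorem cycleType_eq_cycleType_iff {x : Wr G α} {y : Wr G β} :
    x.cycleType = y.cycleType ↔ ∀ v, #{i | x.cycleData i = v} = #{j | y.cycleData j = v} := by
  refine ⟨fun h v => by rw [card_filter_cycleData_eq, card_filter_cycleData_eq, h], fun h => ?_⟩
  exact x.cycleType_eq_of_card_filter_cycleData_eq _ (fun _ => fst_pos_of_mem_cycleType)
    fun v => (h v).trans (card_filter_cycleData_eq y v)

theorem cycleType_relabel (e : α ≃ β) (w : Wr G α) : (relabel e w).cycleType = w.cycleType :=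
  cycleType_eq_cycleType_iff.2 fun v =>
    card_equiv e.symm fun j => by simp [← cycleData_relabel e w (e.symm j)]

theorem cycleType_conj (c w : Wr G α) : (c * w * c⁻¹).cycleType = w.cycleType := by
  rw [conj_eq_diag_conj_relabel, ← cycleType_relabel c.p w]
  exact cycleType_eq_cycleType_iff.2 fun v => by rw [cycleData_diag_conj]

theorem cycleType_eq_of_isConj {x y : Wr G α} (h : IsConj x y) :
    x.cycleType = y.cycleType := by
  obtain ⟨c, rfl⟩ := isConj_iff.1 h
  exact (cycleType_conj c x).symm

theorem isConj_of_cycleType_eq {x y : Wr G α} (h : x.cycleType = y.cycleType) :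
    IsConj x y := by
  obtain ⟨β, hβ⟩ := Fintype.exists_equiv_of_map_univ_eq h
  obtain ⟨π, hπ, hπmk⟩ := exists_semiconj_of_equiv_cycles x.p y.p β fun q => by
    rw [← card_sameCycleFinset, ← card_sameCycleFinset]
    exact congrArg Prod.fst (hβ q)
  have hp : (relabel π x).p = y.p := Equiv.ext fun i => by
    simp [relabel, hπ]
  have hdata : ∀ i, (relabel π x).cycleData (π i) = y.cycleData (π i) := fun i => by
    rw [cycleData_relabel, ← cycleData_mk_out y, hπmk, hβ, cycleData_mk_out]
  have hz := isConj_of_p_eq_of_cycleData_eq hp fun j => by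
    obtain ⟨i, rfl⟩ := π.surjective j
    rw [hdata]
  rw [relabel_eq_conj] at hz
  exact (isConj_iff.2 ⟨_, rfl⟩).trans hz

theorem isConj_iff_cycleType_eq {x y : Wr G α} : IsConj x y ↔ x.cycleType = y.cycleType :=
  ⟨cycleType_eq_of_isConj, isConj_of_cycleType_eq⟩

theorem exists_cycleType_eq_map_univ {ι : Type*} [Fintype ι] [DecidableEq ι] (f : ι → ℕ × G)
    (hf : ∀ b, 0 < (f b).1) (hcard : ∑ b, (f b).1 = Fintype.card α) :
    ∃ w : Wr G α, w.cycleType = univ.val.map f := by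
  -- one rotated block per part, carrying the whole label at position `0`
  let w₀ : Wr G (Σ b, Fin (f b).1) :=
    ⟨fun t => if (t.2 : ℕ) = 0 then (f t.1).2 else 1, Perm.sigmaCongrRight fun b => finRotate _⟩
  have hdata : ∀ t, w₀.cycleData t = f t.1 := by
    rintro ⟨b, i⟩
    rw [cycleData, sameCycleFinset_sigmaCongrRight_finRotate, card_map, prod_map, card_univ,
      Fintype.card_fin]
    show ((f b).1, ∏ j : Fin (f b).1, if (j : ℕ) = 0 then (f b).2 else 1) = f b
    rw [prod_eq_single_of_mem ⟨0, hf b⟩ (mem_univ _) fun j _ hj => if_neg (Fin.val_ne_iff.2 hj),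
      if_pos rfl]
  have hw₀ : w₀.cycleType = univ.val.map f := by
    refine w₀.cycleType_eq_of_card_filter_cycleData_eq _ (by simpa using fun b => hf b) fun v => ?_
    have hsigma : ({t | w₀.cycleData t = v} : Finset (Σ b, Fin (f b).1)) =
        ({b | f b = v} : Finset ι).sigma fun _ => univ := by
      ext ⟨b, j⟩
      simp [hdata]
    rw [hsigma, card_sigma, sum_congr rfl (g := fun _ => v.1) fun b hb => by
      rw [card_univ, Fintype.card_fin, (mem_filter.1 hb).2], sum_const, smul_eq_mul, mul_comm,
      Multiset.count_map, ← filter_val]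
    exact congrArg (v.1 * #·) (filter_congr fun _ _ => eq_comm)
  have e : (Σ b, Fin (f b).1) ≃ α := Fintype.equivOfCardEq (by simpa using hcard)
  exact ⟨relabel e w₀, (cycleType_relabel e w₀).trans hw₀⟩

theorem exists_cycleType_eq (M : Multiset (ℕ × G)) (hM : ∀ v ∈ M, 0 < v.1)
    (hsum : (M.map Prod.fst).sum = Fintype.card α) : ∃ w : Wr G α, w.cycleType = M := by
  classical
  have := exists_cycleType_eq_map_univ (α := α) (fun x : M => (x : ℕ × G))
    (fun x => hM _ (Multiset.coe_mem)) (by rw [← hsum, sum_eq_multiset_sum, Multiset.map_univ])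
  simpa using this

noncomputable def conjClassesEquiv : ConjClasses (Wr G α) ≃
    {M : Multiset (ℕ × G) // (∀ v ∈ M, 0 < v.1) ∧ (M.map Prod.fst).sum = Fintype.card α} :=
  Equiv.ofBijective
    (Quotient.lift (s := IsConj.setoid _)
      (fun w => ⟨w.cycleType, fun _ => fst_pos_of_mem_cycleType, w.sum_map_fst_cycleType⟩)
      fun _ _ h => Subtype.ext (cycleType_eq_of_isConj h))
    ⟨fun c d => Quotient.inductionOn₂ c d fun _ _ h =>
        Quotient.sound (isConj_of_cycleType_eq (congrArg Subtype.val h)),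
      fun M =>
        let ⟨w, hw⟩ := exists_cycleType_eq M.1 M.2.1 M.2.2
        ⟨ConjClasses.mk w, Subtype.ext hw⟩⟩

end Wr

namespace SignedPartition

theorem ext_parts {n : ℕ} {x y : SignedPartition n} (h₁ : x.1.1.2.parts = y.1.1.2.parts)
    (h₂ : x.1.2.2.parts = y.1.2.2.parts) : x = y := by
  revert h₁ h₂
  obtain ⟨⟨⟨c, P⟩, ⟨d, Q⟩⟩, -⟩ := x
  obtain ⟨⟨⟨c', P'⟩, ⟨d', Q'⟩⟩, -⟩ := y
  intro h₁ h₂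
  dsimp only at h₁ h₂
  obtain rfl : c = c' := by rw [← P.parts_sum, ← P'.parts_sum, h₁]
  obtain rfl : d = d' := by rw [← Q.parts_sum, ← Q'.parts_sum, h₂]
  obtain rfl := Nat.Partition.ext h₁
  obtain rfl := Nat.Partition.ext h₂
  rfl

def partsOfSign (M : Multiset (ℕ × ℤˣ)) (ε : ℤˣ) : Multiset ℕ :=
  (M.filter (·.2 = ε)).map Prod.fst

theorem pos_of_mem_partsOfSign {M : Multiset (ℕ × ℤˣ)} (hM : ∀ v ∈ M, 0 < v.1) {ε : ℤˣ}
    {k : ℕ} (hk : k ∈ partsOfSign M ε) : 0 < k := by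
  obtain ⟨v, hv, rfl⟩ := Multiset.mem_map.1 hk
  exact hM v (Multiset.mem_of_mem_filter hv)

theorem map_partsOfSign (M : Multiset (ℕ × ℤˣ)) (ε : ℤˣ) :
    (partsOfSign M ε).map (·, ε) = M.filter (·.2 = ε) := by
  rw [partsOfSign, Multiset.map_map]
  conv_rhs => rw [← Multiset.map_id (M.filter _)]
  exact Multiset.map_congr rfl fun v hv => Prod.ext rfl (Multiset.of_mem_filter hv).symm

theorem eq_map_partsOfSign_add (M : Multiset (ℕ × ℤˣ)) :
    M = (partsOfSign M 1).map (·, 1) + (partsOfSign M (-1)).map (·, -1) := by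
  rw [map_partsOfSign, map_partsOfSign]
  conv_lhs => rw [← Multiset.filter_add_not (·.2 = 1) M]
  simp only [← ne_eq, Int.units_ne_iff_eq_neg]

theorem partsOfSign_add_map (m₁ m₂ : Multiset ℕ) :
    partsOfSign (m₁.map (·, 1) + m₂.map (·, -1)) 1 = m₁ ∧
      partsOfSign (m₁.map (·, 1) + m₂.map (·, -1)) (-1) = m₂ := by
  simp [partsOfSign, Multiset.filter_map]

theorem sum_partsOfSign_add (M : Multiset (ℕ × ℤˣ)) :
    (partsOfSign M 1).sum + (partsOfSign M (-1)).sum = (M.map Prod.fst).sum := by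
  conv_rhs => rw [eq_map_partsOfSign_add M]
  simp [Multiset.map_map]

def multisetEquiv (n : ℕ) :
    {M : Multiset (ℕ × ℤˣ) // (∀ v ∈ M, 0 < v.1) ∧ (M.map Prod.fst).sum = n} ≃
      SignedPartition n where
  toFun M :=
    ⟨(⟨_, ⟨partsOfSign M.1 1, pos_of_mem_partsOfSign M.2.1, rfl⟩⟩,
        ⟨_, ⟨partsOfSign M.1 (-1), pos_of_mem_partsOfSign M.2.1, rfl⟩⟩),
      (sum_partsOfSign_add M.1).trans M.2.2⟩
  invFun x :=
    ⟨x.1.1.2.parts.map (·, 1) + x.1.2.2.parts.map (·, -1),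
      by
        simp only [Multiset.mem_add, Multiset.mem_map]
        rintro _ (⟨k, hk, rfl⟩ | ⟨k, hk, rfl⟩)
        exacts [x.1.1.2.parts_pos hk, x.1.2.2.parts_pos hk],
      by simpa [Multiset.map_map, Nat.Partition.parts_sum] using x.2⟩
  left_inv M := Subtype.ext (eq_map_partsOfSign_add M.1).symm
  right_inv x := ext_parts (partsOfSign_add_map _ _).1 (partsOfSign_add_map _ _).2

end SignedPartition

theorem signedCount_eq_card_filter_cycleData {n : ℕ} (w : Wr ℤˣ (Fin n)) (k : ℕ) (ε : ℤˣ) :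
    signedCount w k ε = #{i | w.cycleData i = (k, ε)} :=
  congrArg card (filter_congr fun i _ => by rw [Wr.cycleData, Prod.mk.injEq]; rfl)

/-- Two elements of `C₂ ≀ Sₙ` are conjugate iff their associated signed partitions coincide
(i.e. for every length `k` and sign `ε` they have the same number of cycles of length `k`
with cycle product `ε`); consequently the conjugacy classes of `C₂ ≀ Sₙ` are in bijection
with the signed partitions of `n`. -/
theorem wreath_conjClasses_signedPartitions (n : ℕ) :
    (∀ x y : Wr ℤˣ (Fin n),
        IsConj x y ↔ ∀ (k : ℕ) (ε : ℤˣ), signedCount x k ε = signedCount y k ε) ∧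
      Nonempty (ConjClasses (Wr ℤˣ (Fin n)) ≃ SignedPartition n) := by
  refine ⟨fun x y => ?_, ⟨?_⟩⟩
  · rw [Wr.isConj_iff_cycleType_eq, Wr.cycleType_eq_cycleType_iff, Prod.forall]
    simp only [signedCount_eq_card_filter_cycleData]
  · exact (Wr.conjClassesEquiv.trans (Equiv.subtypeEquivRight fun M => by
      rw [Fintype.card_fin])).trans (SignedPartition.multisetEquiv n)
end

section
/- For n even, the centralizer in C₂ ≀ Sₙ of the element x = [-1,1,…,1; σ] (first component -1, rest 1, where σ = (1,2,…,n) is an n-cycle) is the cyclic group generated by x, which has order 2n. -/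
open scoped Classical

/-! An element `y` commuting with `x = [a; σ]` satisfies `y.p σ = σ y.p` and
`y.a (σ i) = a (σ i) * y.a i * (a (y.p⁻¹ (σ i)))⁻¹`, so when `σ` is transitive `y` is determined
by the pair `(y.a i₀, y.p i₀)`, and the centralizer has at most `|G| * |α| = 2n` elements.
On the other hand `σ` has order `n` and `x ^ n = [-1, …, -1; 1] ≠ 1`, so `x` has order `2n` and its
powers already fill the centralizer. -/

namespace Wr

variable {G α : Type*}

section Group

variable [Group G]

lemma pow_p (x : Wr G α) (k : ℕ) : (x ^ k).p = x.p ^ k := by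
  induction k with
  | zero => rfl
  | succ k ih => rw [pow_succ, mul_p, ih, pow_succ]

lemma commute_p {x y : Wr G α} (h : Commute x y) : Commute x.p y.p :=
  congrArg p h.eq

lemma a_apply_of_commute {x y : Wr G α} (h : Commute x y) (i : α) :
    y.a (x.p i) = x.a (x.p i) * y.a i * (x.a (y.p⁻¹ (x.p i)))⁻¹ := by
  have := congrFun (congrArg a h.eq) (x.p i)
  simp only [mul_a, Equiv.Perm.coe_inv, Equiv.symm_apply_apply] at this
  exact eq_mul_inv_of_mul_eq this.symm

theorem eq_of_commute_of_apply_eq {x y z : Wr G α} {i₀ : α}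
    (hx : ∀ j, ∃ k : ℕ, (x.p ^ k) i₀ = j) (hy : Commute x y) (hz : Commute x z)
    (ha : y.a i₀ = z.a i₀) (hp : y.p i₀ = z.p i₀) : y = z := by
  have hp_orbit (k : ℕ) : y.p ((x.p ^ k) i₀) = z.p ((x.p ^ k) i₀) := by
    rw [← Equiv.Perm.mul_apply, ← ((commute_p hy).pow_left k).eq, Equiv.Perm.mul_apply, hp,
      ← Equiv.Perm.mul_apply, ((commute_p hz).pow_left k).eq, Equiv.Perm.mul_apply]
  have hp_eq : y.p = z.p := Equiv.ext fun j => by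
    obtain ⟨k, rfl⟩ := hx j
    exact hp_orbit k
  have ha_orbit (k : ℕ) : y.a ((x.p ^ k) i₀) = z.a ((x.p ^ k) i₀) := by
    induction k with
    | zero => exact ha
    | succ k ih =>
      rw [pow_succ', Equiv.Perm.mul_apply, a_apply_of_commute hy, a_apply_of_commute hz, ih, hp_eq]
  ext j
  · obtain ⟨k, rfl⟩ := hx j
    exact ha_orbit k
  · rw [hp_eq]

theorem card_centralizer_le [Finite G] [Finite α] {x : Wr G α} {i₀ : α}
    (hx : ∀ j, ∃ k : ℕ, (x.p ^ k) i₀ = j) :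
    Nat.card (Subgroup.centralizer {x}) ≤ Nat.card G * Nat.card α := by
  rw [← Nat.card_prod]
  refine Nat.card_le_card_of_injective (fun y => (y.1.a i₀, y.1.p i₀)) ?_
  rintro ⟨y, hy⟩ ⟨z, hz⟩ h
  rw [Subgroup.mem_centralizer_singleton_iff] at hy hz
  exact Subtype.ext <| eq_of_commute_of_apply_eq hx hy.symm hz.symm
    (congrArg Prod.fst h) (congrArg Prod.snd h)

theorem centralizer_eq_zpowers [Fintype G] [Fintype α] {x : Wr G α} {i₀ : α}
    (hx : ∀ j, ∃ k : ℕ, (x.p ^ k) i₀ = j) (horder : Nat.card G * Nat.card α ≤ orderOf x) :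
    Subgroup.centralizer {x} = Subgroup.zpowers x := by
  refine (Subgroup.eq_of_le_of_card_ge ?_ ?_).symm
  · exact Subgroup.zpowers_le.mpr (Subgroup.mem_centralizer_singleton_iff.mpr rfl)
  · rw [Nat.card_zpowers]
    exact (card_centralizer_le hx).trans horder

end Group

lemma pow_a [CommGroup G] (x : Wr G α) (k : ℕ) (i : α) :
    (x ^ k).a i = ∏ j ∈ Finset.range k, x.a ((x.p ^ j)⁻¹ i) := by
  induction k with
  | zero => rfl
  | succ k ih => simp only [pow_succ, mul_a, pow_p, ih, Finset.prod_range_succ]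

end Wr

open Fin.NatCast

section NegCycle

variable (n : ℕ) [NeZero n]

lemma finRotate_pow_apply (k : ℕ) (i : Fin n) : (finRotate n ^ k) i = i + k := by
  induction k with
  | zero => simp
  | succ k ih => rw [pow_succ', Equiv.Perm.mul_apply, ih, finRotate_apply, Nat.cast_succ, add_assoc]

noncomputable def negCycle : Wr ℤˣ (Fin n) :=
  ⟨fun i => if i = 0 then -1 else 1, finRotate n⟩

@[simp] lemma negCycle_p : (negCycle n).p = finRotate n := rfl

lemma negCycle_pow_self : negCycle n ^ n = ⟨fun _ => -1, 1⟩ := by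
  ext i : 2
  · rw [Wr.pow_a, ← Fin.prod_univ_eq_prod_range]
    have hinv (j : Fin n) : (finRotate n ^ (j : ℕ))⁻¹ i = i - j := by
      rw [Equiv.Perm.inv_eq_iff_eq, finRotate_pow_apply, Fin.cast_val_eq_self, sub_add_cancel]
    simp only [negCycle, hinv, sub_eq_zero]
    exact Fintype.prod_ite_eq i _
  · rw [Wr.pow_p]
    simp [finRotate_pow_apply]

lemma orderOf_negCycle : orderOf (negCycle n) = 2 * n := by
  have hdvd : n ∣ orderOf (negCycle n) := by
    have h : (negCycle n ^ orderOf (negCycle n)).p 0 = 0 := by rw [pow_orderOf_eq_one]; rfl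
    rwa [Wr.pow_p, negCycle_p, finRotate_pow_apply, zero_add, Fin.natCast_eq_zero] at h
  have hsq : orderOf (negCycle n ^ n) = 2 := by
    refine orderOf_eq_prime ?_ ?_
    · rw [negCycle_pow_self]
      ext i : 2 <;> simp [sq]
    · rw [negCycle_pow_self]
      intro h
      simpa using congrFun (congrArg Wr.a h) 0
  rw [orderOf_pow_of_dvd (NeZero.ne n) hdvd] at hsq
  rw [← hsq, Nat.div_mul_cancel hdvd]

lemma exists_finRotate_pow_apply_zero_eq (j : Fin n) : ∃ k : ℕ, (finRotate n ^ k) 0 = j :=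
  ⟨j, by rw [finRotate_pow_apply, zero_add, Fin.cast_val_eq_self]⟩

theorem centralizer_negCycle : Subgroup.centralizer {negCycle n} = Subgroup.zpowers (negCycle n) :=
  Wr.centralizer_eq_zpowers (i₀ := 0) (exists_finRotate_pow_apply_zero_eq n) <| by
    rw [orderOf_negCycle, Nat.card_eq_fintype_card, Fintype.card_units_int, Nat.card_fin]

end NegCycle

theorem centralizer_negative_n_cycle_general (n : ℕ) (hn : 0 < n)
    (x : Wr ℤˣ (Fin n))
    (hx : x = ⟨fun i => if i = (⟨0, hn⟩ : Fin n) then -1 else 1, finRotate n⟩) :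
    Subgroup.centralizer {x} = Subgroup.zpowers x ∧ orderOf x = 2 * n := by
  have : NeZero n := ⟨hn.ne'⟩
  -- `⟨0, hn⟩` is definitionally the `0` of `Fin n`
  obtain rfl : x = negCycle n := hx
  exact ⟨centralizer_negCycle n, orderOf_negCycle n⟩

/-- For `n` even, the centralizer in `C₂ ≀ Sₙ` of `x = [-1,1,…,1; (1 2 … n)]` is the cyclic
group generated by `x`, of order `2n`. -/
theorem centralizer_negative_n_cycle (n : ℕ) (hn : 0 < n) (he : Even n)
    (x : Wr ℤˣ (Fin n))
    (hx : x = ⟨fun i => if i = (⟨0, hn⟩ : Fin n) then -1 else 1, finRotate n⟩) :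
    Subgroup.centralizer {x} = Subgroup.zpowers x ∧ orderOf x = 2 * n :=
  centralizer_negative_n_cycle_general n hn x hx
end

section
/- The sum over all signed partitions λ± of n of 1/(∏_{i=1}^{n} (2i)^{a_i} a_i! · ∏_{j=1}^{n} (2j)^{b_j} b_j!) equals 1, where a_i (resp. b_j) is the number of positive (resp. negative) parts of λ± equal to i (resp. j). -/
/-!
Write `z(λ) = ∏ (2i)^{a_i} a_i!` and `A(m) = ∑_{λ ⊢ m} 1 / z(λ)`, so that the sum in question is
`∑_k A(k) A(n - k)`. Since `∑ i a_i = m` and removing one part `i` from `λ` divides `z(λ)` by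
`2 i a_i`, one gets `2m A(m) = ∑_{j < m} A(j)`. Hence `f = ∑ A(m) X^m` satisfies `2(1 - X) f' = f`
(so `f = (1 - X)^{-1/2}`), and `f²` satisfies `(1 - X) (f²)' = f²` with constant term `1`, which
forces `f² = 1 / (1 - X)`; the theorem is the coefficient of `X^n`.
-/

open scoped Classical

namespace PowerSeries

theorem coeff_X_mul_derivative {R : Type*} [CommSemiring R] (f : R⟦X⟧) (n : ℕ) :
    coeff n (X * d⁄dX R f) = n * coeff n f := by
  cases n with
  | zero => simp
  | succ n => rw [coeff_succ_X_mul, coeff_derivative, mul_comm]; push_cast; rfl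

variable {K : Type*} [Field K] [CharZero K]

theorem eq_mk_one_of_one_sub_X_mul_derivative {g : K⟦X⟧} (hg₀ : constantCoeff g = 1)
    (hg : (1 - X) * d⁄dX K g = g) : g = mk 1 := by
  ext n
  induction n with
  | zero => simpa using hg₀
  | succ n ih =>
    have hn := congrArg (coeff n) hg
    rw [sub_mul, one_mul, map_sub, coeff_derivative, coeff_X_mul_derivative] at hn
    have : (n + 1 : K) ≠ 0 := Nat.cast_add_one_ne_zero n
    simp only [coeff_mk, Pi.one_apply] at ih ⊢
    apply mul_right_cancel₀ this
    linear_combination hn + (n + 1 : K) * ih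

theorem sq_eq_mk_one_of_two_smul_one_sub_X_mul_derivative {f : K⟦X⟧} (hf₀ : constantCoeff f = 1)
    (hf : (2 : K) • ((1 - X) * d⁄dX K f) = f) : f ^ 2 = mk 1 := by
  refine eq_mk_one_of_one_sub_X_mul_derivative (by simp [hf₀]) ?_
  rw [derivative_pow]
  rw [smul_eq_C_mul] at hf
  calc (1 - X) * (((2 : ℕ) : K⟦X⟧) * f ^ (2 - 1) * d⁄dX K f)
      = f * (C (2 : K) * ((1 - X) * d⁄dX K f)) := by simp [map_ofNat]; ring
    _ = f ^ 2 := by rw [hf, sq]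

end PowerSeries

open Finset

def centralizerWeight (c : ℕ) (s : Multiset ℕ) : ℕ :=
  ∏ i ∈ s.toFinset, (c * i) ^ s.count i * (s.count i).factorial

theorem centralizerWeight_eq_prod_of_subset (c : ℕ) {s : Multiset ℕ} {F : Finset ℕ}
    (h : s.toFinset ⊆ F) :
    centralizerWeight c s = ∏ i ∈ F, (c * i) ^ s.count i * (s.count i).factorial := by
  refine prod_subset h fun i _ hi => ?_
  rw [Multiset.count_eq_zero_of_notMem (by simpa using hi)]
  simp

theorem centralizerWeight_cons (c i : ℕ) (s : Multiset ℕ) :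
    centralizerWeight c (i ::ₘ s) = c * i * (s.count i + 1) * centralizerWeight c s := by
  have hsub : s.toFinset ⊆ insert i s.toFinset := subset_insert _ _
  rw [centralizerWeight_eq_prod_of_subset c (Multiset.toFinset_cons i s).subset,
    centralizerWeight_eq_prod_of_subset c hsub, ← mul_prod_erase _ _ (mem_insert_self i _),
    ← mul_prod_erase _ _ (mem_insert_self i _), Multiset.count_cons_self, pow_succ,
    Nat.factorial_succ, prod_congr rfl fun j hj => by
      rw [Multiset.count_cons_of_ne (mem_erase.mp hj).1]]
  ring

noncomputable def partitionMass (c m : ℕ) : ℚ :=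
  ∑ p : m.Partition, (centralizerWeight c p.parts : ℚ)⁻¹

theorem partitionMass_zero (c : ℕ) : partitionMass c 0 = 1 := by
  simp [partitionMass, centralizerWeight]

namespace Nat.Partition

theorem toFinset_parts_subset_Icc {m n : ℕ} (p : m.Partition) (h : m ≤ n) :
    p.parts.toFinset ⊆ Icc 1 n := fun i hi => by
  rw [Multiset.mem_toFinset] at hi
  exact mem_Icc.mpr ⟨p.parts_pos hi, (p.le_of_mem_parts hi).trans h⟩

theorem sum_Icc_mul_count {m : ℕ} (p : m.Partition) :
    ∑ i ∈ Icc 1 m, i * p.parts.count i = m := by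
  rw [← sum_subset (p.toFinset_parts_subset_Icc le_rfl) fun i _ hi => by
    rw [Multiset.count_eq_zero_of_notMem (by simpa using hi), mul_zero]]
  simpa [mul_comm] using (sum_multiset_count p.parts).symm.trans p.parts_sum

end Nat.Partition

theorem sum_mul_count_div_centralizerWeight {c i m : ℕ} (hc : c ≠ 0) (hi : 1 ≤ i) (him : i ≤ m) :
    ∑ p : m.Partition, (c * i * p.parts.count i : ℚ) / centralizerWeight c p.parts =
      partitionMass c (m - i) := by
  rw [← sum_filter_of_ne (p := fun p : m.Partition => i ∈ p.parts) fun p _ hp => by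
      by_contra h; simp [Multiset.count_eq_zero_of_notMem h] at hp,
    sum_subtype _ mem_filter_univ, partitionMass,
    ← (Nat.Partition.partitionWithPartEquiv hi him).symm.sum_comp]
  refine sum_congr rfl fun q _ => ?_
  have hne : (c * i * (q.parts.count i + 1) : ℚ) ≠ 0 := by
    have : 0 < i := hi
    positivity
  simp only [Nat.Partition.partitionWithPartEquiv_symm_apply_parts, Multiset.count_cons_self,
    centralizerWeight_cons]
  push_cast
  rw [div_eq_mul_inv, mul_inv, mul_inv_cancel_left₀ hne]

theorem mul_partitionMass {c : ℕ} (hc : c ≠ 0) (m : ℕ) :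
    c * m * partitionMass c m = ∑ j ∈ range m, partitionMass c j := by
  calc c * m * partitionMass c m
      = ∑ i ∈ Icc 1 m, ∑ p : m.Partition,
          (c * i * p.parts.count i : ℚ) / centralizerWeight c p.parts := by
        rw [sum_comm, partitionMass, mul_sum]
        refine sum_congr rfl fun p _ => ?_
        have hm : (m : ℚ) = ∑ i ∈ Icc 1 m, (i * p.parts.count i : ℚ) :=
          mod_cast p.sum_Icc_mul_count.symm
        rw [hm, mul_sum, sum_mul]
        exact sum_congr rfl fun i _ => by ring
    _ = ∑ i ∈ Icc 1 m, partitionMass c (m - i) :=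
        sum_congr rfl fun i hi => sum_mul_count_div_centralizerWeight hc
          (mem_Icc.mp hi).1 (mem_Icc.mp hi).2
    _ = ∑ j ∈ range m, partitionMass c j := by
        rw [← Ico_add_one_right_eq_Icc, sum_Ico_reflect _ _ le_rfl, range_eq_Ico]
        simp

open PowerSeries in
theorem sum_range_partitionMass_two_mul_sub_eq_one (n : ℕ) :
    ∑ k ∈ range (n + 1), partitionMass 2 k * partitionMass 2 (n - k) = 1 := by
  have hode : (2 : ℚ) • ((1 - X) * d⁄dX ℚ (PowerSeries.mk (partitionMass 2))) =
      PowerSeries.mk (partitionMass 2) := by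
    ext m
    have hsucc := mul_partitionMass two_ne_zero (m + 1)
    rw [sum_range_succ, ← mul_partitionMass two_ne_zero m] at hsucc
    rw [coeff_smul, sub_mul, one_mul, map_sub, coeff_derivative, coeff_X_mul_derivative]
    simp only [coeff_mk, smul_eq_mul]
    push_cast at hsucc
    linear_combination hsucc
  have hsq := congrArg (coeff n)
    (sq_eq_mk_one_of_two_smul_one_sub_X_mul_derivative (by simp [partitionMass_zero]) hode)
  simpa only [sq, coeff_mul, coeff_mk, Pi.one_apply,
    Nat.sum_antidiagonal_eq_sum_range_succ fun i j => partitionMass 2 i * partitionMass 2 j]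
    using hsq

/-- The sum over all signed partitions of `n` of the reciprocals of the centralizer orders
equals `1`. -/
theorem sum_inv_centralizer_orders (n : ℕ) :
    ∑ k ∈ Finset.range (n + 1), ∑ p : Nat.Partition k, ∑ q : Nat.Partition (n - k),
        (1 : ℚ) / ((∏ i ∈ Finset.Icc 1 n,
          (2 * i) ^ (p.parts.count i) * (p.parts.count i).factorial *
            ((2 * i) ^ (q.parts.count i) * (q.parts.count i).factorial) : ℕ) : ℚ) = 1 := by
  refine (sum_congr rfl fun k hk => ?_).trans (sum_range_partitionMass_two_mul_sub_eq_one n)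
  have hkn : k ≤ n := Nat.lt_succ_iff.mp (mem_range.mp hk)
  rw [partitionMass, partitionMass, sum_mul_sum]
  refine sum_congr rfl fun p _ => sum_congr rfl fun q _ => ?_
  rw [prod_mul_distrib, ← centralizerWeight_eq_prod_of_subset 2 (p.toFinset_parts_subset_Icc hkn),
    ← centralizerWeight_eq_prod_of_subset 2 (q.toFinset_parts_subset_Icc (Nat.sub_le n k))]
  push_cast
  rw [one_div, mul_inv]
end

section
/- For every n ≥ 1 and r ≥ 1, the expression (1/(2ⁿ n!)) · ∑_{w ∈ C₂ ≀ Sₙ} det(I + x·A_w)^r equals ∑_{λ± ∈ 𝒫ₙ^±} [∏_{i=1}^{n} (1-(-x)^i)^{a_i r} · ∏_{j=1}^{n} (1+(-x)^j)^{b_j r}] / [∏_{i=1}^{n} (2i)^{a_i} a_i! · ∏_{j=1}^{n} (2j)^{b_j} b_j!], where A_w is the signed permutation matrix of w acting on ℂⁿ, and a_i, b_j are the numbers of positive/negative parts of the signed partition λ± equal to i, j. -/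
open scoped Classical

/-- The signed permutation matrix of `w ∈ C₂ ≀ Sₙ` acting on `H¹(T,ℂ) ≅ ℂⁿ`:
`e_j ↦ (w.a (w.p j)) • e_{w.p j}`. -/
noncomputable def Aw {n : ℕ} (w : Wr ℤˣ (Fin n)) : Matrix (Fin n) (Fin n) ℂ :=
  Matrix.of fun i j => if i = w.p j then ((w.a i : ℤ) : ℂ) else 0

/-!
Deleting the cycle through `0` from a signed permutation `w` of `Fin (n + 1)` leaves a signed
permutation of the remaining `n - j` points, and `det (1 + x A_w)` factors accordingly: a cycle of
length `j + 1` whose signs multiply to `ε` contributes `1 - ε (-x) ^ (j + 1)`. Summing over the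
positions and the signs of the deleted cycle shows that
`S = ∑ₙ (∑_w det (1 + x A_w) ^ r) / (2ⁿ n!) Xⁿ` solves `S' = h S` with
`h = ∑ᵢ (uᵢ₊₁ + vᵢ₊₁) / 2 Xⁱ`, `uᵢ = (1 - (-x)ⁱ)ʳ`, `vᵢ = (1 + (-x)ⁱ)ʳ`.
Deleting one part from a partition shows that the generating function of the weights
`∏ᵢ Fᵢ ^ mᵢ / ((2i) ^ mᵢ mᵢ!)` solves `P' = h_F P`, with `F` in place of `u + v`. Hence the product
of the series for `u` and for `v` solves the same equation as `S`, and a solution of `f' = h f`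
is determined by its constant term.
-/

open Matrix Equiv Equiv.Perm PowerSeries

theorem Equiv.Perm.eq_one_or_eq_of_forall_apply_eq_or_eq {α : Type*} [Finite α] {σ τ : Perm α}
    (hσ : ∀ i j, σ.SameCycle i j) (hfix : ∀ i, σ i ≠ i) (hτ : ∀ i, τ i = i ∨ τ i = σ i) :
    τ = 1 ∨ τ = σ := by
  by_cases h : ∃ i₀, τ i₀ = σ i₀
  · obtain ⟨i₀, hi₀⟩ := h
    have step : ∀ i, τ i = σ i → τ (σ i) = σ (σ i) := fun i hi =>
      (hτ (σ i)).resolve_left fun h' => hfix i (τ.injective (hi.trans h'.symm)).symm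
    have along_orbit : ∀ k : ℕ, τ ((σ ^ k) i₀) = σ ((σ ^ k) i₀) := by
      intro k
      induction k with
      | zero => exact hi₀
      | succ k ih => rw [pow_succ', Perm.mul_apply]; exact step _ ih
    right
    ext j
    obtain ⟨k, rfl⟩ := (hσ i₀ j).exists_nat_pow_eq
    exact along_orbit k
  · push Not at h
    exact Or.inl (Perm.ext fun i => (hτ i).resolve_right (h i))

theorem Equiv.Perm.sameCycle_finRotate_s16 {m : ℕ} (i k : Fin m) : (finRotate m).SameCycle i k := by
  rcases lt_or_ge m 2 with hm | hm
  · obtain rfl : i = k := Fin.ext (by omega)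
    exact SameCycle.refl _ _
  · have hmov (i : Fin m) : finRotate m i ≠ i :=
      Perm.mem_support.1 (support_finRotate_of_le hm ▸ Finset.mem_univ i)
    exact (isCycle_finRotate_of_le hm).sameCycle (hmov i) (hmov k)

section WeightedPermMatrix

variable {α β R : Type*} [DecidableEq α] [DecidableEq β] [CommRing R]

def weightedPermMatrix (σ : Perm α) (b : α → R) : Matrix α α R :=
  Matrix.of fun i j => if i = σ j then b i else 0

theorem smul_weightedPermMatrix (x : R) (σ : Perm α) (b : α → R) :
    x • weightedPermMatrix σ b = weightedPermMatrix σ (fun i => x * b i) := by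
  ext i j
  simp [weightedPermMatrix, mul_ite]

theorem weightedPermMatrix_permCongr (e : α ≃ β) (σ : Perm α) (b : α → R) :
    weightedPermMatrix (e.permCongr σ) (b ∘ e.symm) =
      (weightedPermMatrix σ b).submatrix e.symm e.symm := by
  ext i j
  simp [weightedPermMatrix, Equiv.permCongr_apply, ← Equiv.symm_apply_eq]

theorem weightedPermMatrix_sumCongr (σ : Perm α) (π : Perm β) (b : α → R) (c : β → R) :
    weightedPermMatrix (Perm.sumCongr σ π) (Sum.elim b c) =
      fromBlocks (weightedPermMatrix σ b) 0 0 (weightedPermMatrix π c) := by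
  ext (i | i) (j | j) <;> simp [weightedPermMatrix]

variable [Fintype α] [Fintype β]

theorem Matrix.det_one_add_submatrix_equiv (e : β ≃ α) (M : Matrix α α R) :
    det (1 + M.submatrix e e) = det (1 + M) := by
  rw [← submatrix_one_equiv e]
  exact det_submatrix_equiv_self e (1 + M)

theorem Matrix.det_one_add_fromBlocks_zero (A : Matrix α α R) (D : Matrix β β R) :
    det (1 + fromBlocks A 0 0 D) = det (1 + A) * det (1 + D) := by
  rw [← fromBlocks_one, fromBlocks_add, add_zero, zero_add, det_fromBlocks_zero₂₁]

theorem det_one_add_weightedPermMatrix_of_sameCycle [Nonempty α] {σ : Perm α}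
    (hσ : ∀ i j, σ.SameCycle i j) (b : α → R) :
    det (1 + weightedPermMatrix σ b) = 1 - ∏ i, -b i := by
  by_cases hfix : ∃ i, σ i = i
  · obtain ⟨i, hi⟩ := hfix
    have : Subsingleton α := ⟨fun j k => by
      obtain ⟨m, rfl⟩ := (hσ i j).exists_nat_pow_eq
      obtain ⟨m', rfl⟩ := (hσ i k).exists_nat_pow_eq
      rw [Perm.pow_apply_eq_self_of_apply_eq_self hi, Perm.pow_apply_eq_self_of_apply_eq_self hi]⟩
    let : Unique α := uniqueOfSubsingleton i
    rw [det_unique, Fintype.prod_unique, Subsingleton.elim default i]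
    simp [weightedPermMatrix, hi]
  push Not at hfix
  have hcycle : σ.IsCycle := by
    obtain ⟨i⟩ := ‹Nonempty α›
    exact ⟨i, hfix i, fun j _ => hσ i j⟩
  have hsign : Perm.sign σ = -(-1) ^ Fintype.card α := by
    rw [hcycle.sign, show σ.support = Finset.univ from Finset.eq_univ_of_forall fun i =>
      Perm.mem_support.2 (hfix i), Finset.card_univ]
  have hvanish : ∀ τ ∈ Finset.univ, τ ∉ ({1, σ} : Finset (Perm α)) →
      Perm.sign τ • ∏ i, (1 + weightedPermMatrix σ b) (τ i) i = 0 := by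
    intro τ _ hτ
    simp only [Finset.mem_insert, Finset.mem_singleton, not_or] at hτ
    have : ¬ ∀ i, τ i = i ∨ τ i = σ i := fun h =>
      (eq_one_or_eq_of_forall_apply_eq_or_eq hσ hfix h).elim hτ.1 hτ.2
    push Not at this
    obtain ⟨i, hi₁, hi₂⟩ := this
    rw [Finset.prod_eq_zero (Finset.mem_univ i) (by simp [weightedPermMatrix, hi₁, hi₂]),
      smul_zero]
  have hne : (1 : Perm α) ≠ σ := fun h => by
    obtain ⟨i⟩ := ‹Nonempty α›
    exact hfix i (by rw [← h]; rfl)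
  rw [det_apply, ← Finset.sum_subset (Finset.subset_univ _) hvanish, Finset.sum_pair hne]
  simp [weightedPermMatrix, hsign, Finset.prod_neg, hfix, Equiv.prod_comp σ b, Units.smul_def,
    sub_eq_add_neg, fun i => (hfix i).symm]

end WeightedPermMatrix

theorem Fintype.sum_comp_prod_fin_succ {G M : Type*} [CommGroup G] [Fintype G]
    [AddCommMonoid M] (k : ℕ) (H : G → M) :
    ∑ s : Fin (k + 1) → G, H (∏ i, s i) = Fintype.card G ^ k • ∑ g, H g := by
  induction k generalizing H with
  | zero => simpa using ((Equiv.funUnique (Fin 1) G).symm.sum_comp fun s => H (∏ i, s i)).symm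
  | succ k ih =>
    have translate (g : G) : ∑ t : Fin (k + 1) → G, H (g * ∏ i, t i) =
        Fintype.card G ^ k • ∑ h, H h := by
      rw [ih fun h => H (g * h)]
      exact congrArg _ (Equiv.sum_comp (Equiv.mulLeft g) H)
    rw [← (Fin.consEquiv fun _ => G).sum_comp, Fintype.sum_prod_type]
    simp only [Fin.consEquiv_apply, Fin.prod_cons, translate, Finset.sum_const, Finset.card_univ,
      smul_smul, pow_succ']

theorem Int.sum_units {M : Type*} [AddCommMonoid M] (H : ℤˣ → M) : ∑ ε, H ε = H 1 + H (-1) := by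
  rw [show (Finset.univ : Finset ℤˣ) = {1, -1} by decide, Finset.sum_pair (by decide)]

namespace Wr

theorem card_eq {G α : Type*} [Group G] [Fintype G] [Fintype α] [DecidableEq α] :
    Fintype.card (Wr G α) = Fintype.card G ^ Fintype.card α * (Fintype.card α).factorial := by
  rw [Fintype.card_congr ⟨fun w => (w.a, w.p), fun x => ⟨x.1, x.2⟩, fun _ => rfl, fun _ => rfl⟩,
    Fintype.card_prod, Fintype.card_fun, Fintype.card_perm]

variable {G : Type*} {n j : ℕ}

def cycleEmb (g : Fin j ↪ Fin n) : Fin (j + 1) ↪ Fin (n + 1) :=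
  ⟨Fin.cons 0 (Fin.succ ∘ g), Fin.cons_injective_iff.2
    ⟨fun ⟨_, hi⟩ => Fin.succ_ne_zero _ hi, (Fin.succ_injective _).comp g.injective⟩⟩

@[simp] theorem cycleEmb_zero (g : Fin j ↪ Fin n) : cycleEmb g 0 = 0 := rfl

@[simp] theorem cycleEmb_succ (g : Fin j ↪ Fin n) (t : Fin j) :
    cycleEmb g t.succ = (g t).succ := by
  simp [cycleEmb]

theorem card_compl_range_cycleEmb (g : Fin j ↪ Fin n) :
    Fintype.card {i // i ∉ Set.range (cycleEmb g)} = n - j := by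
  rw [Fintype.card_subtype_compl, Fintype.card_fin,
    Set.card_range_of_injective (cycleEmb g).injective, Fintype.card_fin]
  omega

noncomputable def cycleSplit (g : Fin j ↪ Fin n) : Fin (j + 1) ⊕ Fin (n - j) ≃ Fin (n + 1) :=
  (Equiv.sumCongr (Equiv.ofInjective _ (cycleEmb g).injective)
    (Fintype.equivFinOfCardEq (card_compl_range_cycleEmb g)).symm).trans
    (Equiv.sumCompl (· ∈ Set.range (cycleEmb g)))

@[simp] theorem cycleSplit_inl (g : Fin j ↪ Fin n) (t : Fin (j + 1)) :
    cycleSplit g (.inl t) = cycleEmb g t := rfl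

/-- The signed permutation with cycle `0 ↦ g 0 + 1 ↦ ⋯ ↦ g (j - 1) + 1 ↦ 0` carrying the signs
`s`, acting as `w` on the complement of that cycle (enumerated by `cycleSplit g`). -/
noncomputable def consCycle (g : Fin j ↪ Fin n) (s : Fin (j + 1) → G) (w : Wr G (Fin (n - j))) :
    Wr G (Fin (n + 1)) where
  a := Sum.elim s w.a ∘ (cycleSplit g).symm
  p := (cycleSplit g).permCongr (Perm.sumCongr (finRotate (j + 1)) w.p)

variable (g : Fin j ↪ Fin n) (s : Fin (j + 1) → G) (w : Wr G (Fin (n - j)))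

theorem consCycle_a_cycleSplit (x : Fin (j + 1) ⊕ Fin (n - j)) :
    (consCycle g s w).a (cycleSplit g x) = Sum.elim s w.a x := by
  simp [consCycle]

theorem consCycle_p_cycleSplit (x : Fin (j + 1) ⊕ Fin (n - j)) :
    (consCycle g s w).p (cycleSplit g x) =
      cycleSplit g (Perm.sumCongr (finRotate (j + 1)) w.p x) := by
  simp [consCycle, Equiv.permCongr_apply]

open Fin.NatCast in
theorem consCycle_p_pow_apply_zero (i : ℕ) :
    ((consCycle g s w).p ^ i) 0 = cycleEmb g (i : Fin (j + 1)) := by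
  induction i with
  | zero => rfl
  | succ i ih =>
    rw [pow_succ', Perm.mul_apply, ih, ← cycleSplit_inl, consCycle_p_cycleSplit]
    simp [finRotate_apply]

open Fin.NatCast in
theorem consCycle_p_pow_apply_zero_eq_zero_iff (i : ℕ) :
    ((consCycle g s w).p ^ i) 0 = 0 ↔ j + 1 ∣ i := by
  rw [consCycle_p_pow_apply_zero, ← cycleEmb_zero g, (cycleEmb g).injective.eq_iff,
    Fin.natCast_eq_zero]

theorem consCycle_p_pow_succ_apply_zero (t : Fin j) :
    ((consCycle g s w).p ^ (t + 1 : ℕ)) 0 = (g t).succ := by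
  rw [consCycle_p_pow_apply_zero, ← cycleEmb_succ]
  congr
  exact Fin.ext (by simp [Nat.mod_eq_of_lt (Nat.succ_lt_succ t.isLt)])

variable (G n) in
abbrev CycleData := Σ j : Fin (n + 1), (Fin j ↪ Fin n) × (Fin (j + 1) → G) × Wr G (Fin (n - j))

theorem consCycle_injective :
    Function.Injective fun d : CycleData G n => consCycle d.2.1 d.2.2.1 d.2.2.2 := by
  rintro ⟨j₁, g₁, s₁, w₁⟩ ⟨j₂, g₂, s₂, w₂⟩ h
  simp only at h
  have hdvd {j₁ j₂ : Fin (n + 1)} {g₁ : Fin j₁ ↪ Fin n} {s₁ w₁} {g₂ : Fin j₂ ↪ Fin n} {s₂ w₂}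
      (h : consCycle (G := G) g₁ s₁ w₁ = consCycle g₂ s₂ w₂) : (j₂ : ℕ) + 1 ∣ j₁ + 1 := by
    rw [← consCycle_p_pow_apply_zero_eq_zero_iff g₂ s₂ w₂, ← h,
      consCycle_p_pow_apply_zero_eq_zero_iff]
  obtain rfl : j₁ = j₂ := Fin.ext (Nat.succ_injective (Nat.dvd_antisymm (hdvd h.symm) (hdvd h)))
  obtain rfl : g₁ = g₂ := by
    ext t
    have := consCycle_p_pow_succ_apply_zero g₁ s₁ w₁ t
    rw [h, consCycle_p_pow_succ_apply_zero] at this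
    exact congrArg Fin.val (Fin.succ_injective _ this).symm
  have ha x := congrArg (fun w => w.a (cycleSplit g₁ x)) h
  have hp x := congrArg (fun w => w.p (cycleSplit g₁ x)) h
  simp only [consCycle_a_cycleSplit, consCycle_p_cycleSplit, (cycleSplit g₁).injective.eq_iff]
    at ha hp
  obtain rfl : s₁ = s₂ := funext fun t => ha (.inl t)
  obtain rfl : w₁ = w₂ := Wr.ext (funext fun y => ha (.inr y))
    (Equiv.ext fun y => Sum.inr_injective (hp (.inr y)))
  rfl

variable [Group G] [Fintype G]

theorem card_cycleData :
    Fintype.card (CycleData G n) = Fintype.card G ^ (n + 1) * (n + 1).factorial := by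
  have hterm (j : Fin (n + 1)) :
      Fintype.card ((Fin j ↪ Fin n) × (Fin (j + 1) → G) × Wr G (Fin (n - j))) =
        Fintype.card G ^ (n + 1) * n.factorial := by
    have hj : (j : ℕ) ≤ n := Nat.lt_succ_iff.1 j.isLt
    rw [Fintype.card_prod, Fintype.card_prod, Fintype.card_embedding_eq, Fintype.card_fun, card_eq]
    simp only [Fintype.card_fin]
    have hpow : Fintype.card G ^ (n + 1) =
        Fintype.card G ^ ((j : ℕ) + 1) * Fintype.card G ^ (n - j) := by
      rw [← pow_add]
      congr 1
      omega
    rw [← Nat.factorial_mul_descFactorial hj, hpow]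
    ring
  rw [Fintype.card_sigma, Finset.sum_congr rfl fun j _ => hterm j, Finset.sum_const,
    Finset.card_univ, Fintype.card_fin, smul_eq_mul, Nat.factorial_succ]
  ring

theorem sum_eq_sum_consCycle {M : Type*} [AddCommMonoid M] (f : Wr G (Fin (n + 1)) → M) :
    ∑ w, f w = ∑ j : Fin (n + 1), ∑ g : Fin j ↪ Fin n, ∑ s : Fin (j + 1) → G,
      ∑ w : Wr G (Fin (n - j)), f (consCycle g s w) := by
  have hbij : Function.Bijective fun d : CycleData G n => consCycle d.2.1 d.2.2.1 d.2.2.2 := by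
    rw [Fintype.bijective_iff_injective_and_card, card_cycleData, card_eq, Fintype.card_fin]
    exact ⟨consCycle_injective, rfl⟩
  rw [← Fintype.sum_bijective _ hbij _ f fun _ => rfl, Fintype.sum_sigma]
  simp only [Fintype.sum_prod_type]

end Wr

theorem Aw_eq_weightedPermMatrix {n : ℕ} (w : Wr ℤˣ (Fin n)) :
    Aw w = weightedPermMatrix w.p (fun i => ((w.a i : ℤ) : ℂ)) := rfl

open Wr in
theorem det_one_add_smul_Aw_consCycle {n j : ℕ} (x : ℂ) (g : Fin j ↪ Fin n)
    (s : Fin (j + 1) → ℤˣ) (w : Wr ℤˣ (Fin (n - j))) :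
    det (1 + x • Aw (consCycle g s w)) =
      (1 - (-x) ^ (j + 1) * (((∏ i, s i : ℤˣ) : ℤ) : ℂ)) * det (1 + x • Aw w) := by
  have hA : Aw (consCycle g s w) = (weightedPermMatrix (Perm.sumCongr (finRotate (j + 1)) w.p)
      (Sum.elim (fun t => ((s t : ℤ) : ℂ)) (fun y => ((w.a y : ℤ) : ℂ)))).submatrix
        (cycleSplit g).symm (cycleSplit g).symm := by
    rw [← weightedPermMatrix_permCongr, Aw_eq_weightedPermMatrix]
    congr 1
    ext i
    simp only [consCycle, Function.comp_apply]
    cases (cycleSplit g).symm i <;> rfl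
  have hsmul : x • Aw (consCycle g s w) = (x • fromBlocks
      (weightedPermMatrix (finRotate (j + 1)) (fun t => ((s t : ℤ) : ℂ))) 0 0 (Aw w)).submatrix
        (cycleSplit g).symm (cycleSplit g).symm := by
    rw [hA, weightedPermMatrix_sumCongr]
    rfl
  rw [hsmul, det_one_add_submatrix_equiv, fromBlocks_smul, smul_zero, smul_zero,
    det_one_add_fromBlocks_zero, smul_weightedPermMatrix,
    det_one_add_weightedPermMatrix_of_sameCycle sameCycle_finRotate_s16]
  simp_rw [← neg_mul, Finset.prod_mul_distrib, Finset.prod_const, Finset.card_univ,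
    Fintype.card_fin]
  push_cast
  rfl

noncomputable def sumDetPow (x : ℂ) (r n : ℕ) : ℂ :=
  ∑ w : Wr ℤˣ (Fin n), det (1 + x • Aw w) ^ r

theorem sumDetPow_succ (x : ℂ) (r n : ℕ) :
    sumDetPow x r (n + 1) = ∑ j ∈ Finset.range (n + 1), n.descFactorial j * 2 ^ j *
      ((1 - (-x) ^ (j + 1)) ^ r + (1 + (-x) ^ (j + 1)) ^ r) * sumDetPow x r (n - j) := by
  rw [sumDetPow, Wr.sum_eq_sum_consCycle, ← Fin.sum_univ_eq_sum_range]
  refine Finset.sum_congr rfl fun j _ => ?_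
  simp_rw [det_one_add_smul_Aw_consCycle, mul_pow, ← Finset.mul_sum, ← Finset.sum_mul]
  rw [Fintype.sum_comp_prod_fin_succ j
      fun ε : ℤˣ => (1 - (-x) ^ ((j : ℕ) + 1) * ((ε : ℤ) : ℂ)) ^ r,
    Int.sum_units]
  simp only [Finset.sum_const, Finset.card_univ, Fintype.card_embedding_eq, Fintype.card_fin,
    Fintype.card_units_int, nsmul_eq_mul, sumDetPow]
  push_cast
  ring

noncomputable def avgDetPowSeries (x : ℂ) (r : ℕ) : ℂ⟦X⟧ :=
  mk fun n => sumDetPow x r n / (2 ^ n * n.factorial)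

theorem derivative_avgDetPowSeries (x : ℂ) (r : ℕ) :
    d⁄dX ℂ (avgDetPowSeries x r) =
      mk (fun i => ((1 - (-x) ^ (i + 1)) ^ r + (1 + (-x) ^ (i + 1)) ^ r) / 2) *
        avgDetPowSeries x r := by
  ext k
  rw [coeff_derivative, coeff_mul, Finset.Nat.sum_antidiagonal_eq_sum_range_succ_mk]
  simp only [avgDetPowSeries, coeff_mk]
  rw [sumDetPow_succ, Finset.sum_div, Finset.sum_mul]
  refine Finset.sum_congr rfl fun j hj => ?_
  have hjk : j ≤ k := Nat.lt_succ_iff.1 (Finset.mem_range.1 hj)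
  have hpow : (2 : ℂ) ^ (k + 1) = 2 * 2 ^ j * 2 ^ (k - j) := by
    rw [mul_assoc, ← pow_add, ← pow_succ']
    congr 1
    omega
  have hfact : ((k + 1).factorial : ℂ) = (k + 1) * (k - j).factorial * k.descFactorial j := by
    rw [Nat.factorial_succ, ← Nat.factorial_mul_descFactorial hjk]
    push_cast
    ring
  have hdesc : (k.descFactorial j : ℂ) ≠ 0 :=
    Nat.cast_ne_zero.2 fun h => absurd (Nat.descFactorial_eq_zero_iff_lt.1 h) (by omega)
  rw [hpow, hfact]
  field_simp

/-- The coefficient of `Xⁿ` in `Nat.Partition.genFun (hyperoctahedralChar F)` is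
`∑_{λ ⊢ n} ∏ᵢ Fᵢ ^ mᵢ / ((2i) ^ mᵢ mᵢ!)`, where `mᵢ` is the multiplicity of `i` in `λ`. -/
noncomputable def hyperoctahedralChar (F : ℕ → ℂ) (i c : ℕ) : ℂ :=
  (F i / (2 * i)) ^ c / c.factorial

theorem hyperoctahedralChar_succ_mul (F : ℕ → ℂ) {a : ℕ} (ha : a ≠ 0) (c : ℕ) :
    hyperoctahedralChar F a (c + 1) * (2 * a * (c + 1)) = F a * hyperoctahedralChar F a c := by
  have : (a : ℂ) ≠ 0 := Nat.cast_ne_zero.2 ha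
  simp only [hyperoctahedralChar, Nat.factorial_succ, pow_succ]
  push_cast
  field_simp

theorem prod_hyperoctahedralChar_cons (F : ℕ → ℂ) {a : ℕ} (ha : a ≠ 0) (m : Multiset ℕ) :
    (a ::ₘ m).toFinsupp.prod (hyperoctahedralChar F) * (2 * a * (a ::ₘ m).count a) =
      F a * m.toFinsupp.prod (hyperoctahedralChar F) := by
  have hχ0 (i : ℕ) (_ : i ∈ insert a m.toFinset) : hyperoctahedralChar F i 0 = 1 := by
    simp [hyperoctahedralChar]
  have hsupp : (a ::ₘ m).toFinsupp.support ⊆ insert a m.toFinset := by simp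
  have hsupp' : m.toFinsupp.support ⊆ insert a m.toFinset := by simp
  rw [Finsupp.prod_of_support_subset _ hsupp _ hχ0, Finsupp.prod_of_support_subset _ hsupp' _ hχ0,
    ← Finset.mul_prod_erase _ _ (Finset.mem_insert_self a _),
    ← Finset.mul_prod_erase _ _ (Finset.mem_insert_self a _),
    Finset.prod_congr rfl fun i hi => by
      rw [Multiset.toFinsupp_apply, Multiset.count_cons_of_ne (Finset.ne_of_mem_erase hi)]]
  simp only [Multiset.toFinsupp_apply, Multiset.count_cons_self]
  push_cast
  linear_combination (∏ i ∈ (insert a m.toFinset).erase a, hyperoctahedralChar F i (m.count i)) *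
    hyperoctahedralChar_succ_mul F ha (m.count a)

theorem two_mul_mul_sum_partition_prod_hyperoctahedralChar (F : ℕ → ℂ) (N : ℕ) :
    2 * N * ∑ p : N.Partition, p.parts.toFinsupp.prod (hyperoctahedralChar F) =
      ∑ a ∈ Finset.Icc 1 N, F a *
        ∑ q : (N - a).Partition, q.parts.toFinsupp.prod (hyperoctahedralChar F) := by
  have hsum (p : N.Partition) :
      2 * (N : ℂ) = ∑ a ∈ p.parts.toFinset, 2 * (a : ℂ) * p.parts.count a := by
    have h : (N : ℂ) = ((∑ a ∈ p.parts.toFinset, p.parts.count a • a : ℕ) : ℂ) :=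
      congrArg _ (p.parts_sum.symm.trans (Finset.sum_multiset_count p.parts))
    rw [h, Nat.cast_sum, Finset.mul_sum]
    refine Finset.sum_congr rfl fun a _ => ?_
    push_cast [smul_eq_mul]
    ring
  have hremove (a : ℕ) (ha : a ∈ Finset.Icc 1 N) :
      ∑ p ∈ (Finset.univ : Finset N.Partition).filter (a ∈ ·.parts),
        p.parts.toFinsupp.prod (hyperoctahedralChar F) * (2 * a * p.parts.count a) =
      F a * ∑ q : (N - a).Partition, q.parts.toFinsupp.prod (hyperoctahedralChar F) := by
    obtain ⟨ha1, haN⟩ := Finset.mem_Icc.1 ha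
    rw [Finset.sum_subtype _ (p := fun p : N.Partition => a ∈ p.parts) (fun p => by simp),
      Finset.mul_sum, ← (Nat.Partition.partitionWithPartEquiv ha1 haN).symm.sum_comp]
    refine Finset.sum_congr rfl fun q _ => ?_
    rw [Nat.Partition.partitionWithPartEquiv_symm_apply_parts]
    exact_mod_cast prod_hyperoctahedralChar_cons F (by omega) q.parts
  calc 2 * N * ∑ p : N.Partition, p.parts.toFinsupp.prod (hyperoctahedralChar F)
      = ∑ p : N.Partition, ∑ a ∈ p.parts.toFinset,
          p.parts.toFinsupp.prod (hyperoctahedralChar F) * (2 * a * p.parts.count a) := by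
        rw [Finset.mul_sum]
        refine Finset.sum_congr rfl fun p _ => ?_
        rw [← Finset.mul_sum, mul_comm, hsum p]
    _ = ∑ a ∈ Finset.Icc 1 N, ∑ p ∈ (Finset.univ : Finset N.Partition).filter (a ∈ ·.parts),
          p.parts.toFinsupp.prod (hyperoctahedralChar F) * (2 * a * p.parts.count a) := by
        refine Finset.sum_comm' fun p a => ?_
        simp only [Finset.mem_univ, Multiset.mem_toFinset, true_and, Finset.mem_filter,
          Finset.mem_Icc]
        exact ⟨fun h => ⟨h, p.parts_pos h, Nat.Partition.le_of_mem_parts h⟩, And.left⟩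
    _ = _ := Finset.sum_congr rfl hremove

theorem derivative_genFun_hyperoctahedralChar (F : ℕ → ℂ) :
    d⁄dX ℂ (Nat.Partition.genFun (hyperoctahedralChar F)) =
      mk (fun i => F (i + 1) / 2) * Nat.Partition.genFun (hyperoctahedralChar F) := by
  ext k
  have h := two_mul_mul_sum_partition_prod_hyperoctahedralChar F (k + 1)
  rw [← Finset.Ico_add_one_right_eq_Icc, Finset.sum_Ico_eq_sum_range, add_tsub_cancel_right] at h
  have hterm (i : ℕ) : F (1 + i) *
      ∑ q : (k + 1 - (1 + i)).Partition, q.parts.toFinsupp.prod (hyperoctahedralChar F) =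
      2 * (F (i + 1) / 2 *
        ∑ q : (k - i).Partition, q.parts.toFinsupp.prod (hyperoctahedralChar F)) := by
    rw [show k + 1 - (1 + i) = k - i by omega, add_comm 1 i]
    ring
  simp only [hterm, ← Finset.mul_sum] at h
  rw [coeff_derivative, coeff_mul, Finset.Nat.sum_antidiagonal_eq_sum_range_succ_mk]
  simp only [Nat.Partition.coeff_genFun, coeff_mk]
  push_cast at h
  linear_combination h / 2

theorem constantCoeff_genFun_hyperoctahedralChar (F : ℕ → ℂ) :
    constantCoeff (Nat.Partition.genFun (hyperoctahedralChar F)) = 1 := by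
  rw [← coeff_zero_eq_constantCoeff_apply, Nat.Partition.coeff_genFun, Fintype.sum_unique]
  simp

theorem PowerSeries.eq_of_derivative_eq_mul_self {R : Type*} [CommRing R] [IsAddTorsionFree R]
    {f g h : R⟦X⟧} (hf : d⁄dX R f = h * f) (hg : d⁄dX R g = h * g)
    (h0 : constantCoeff f = constantCoeff g) : f = g := by
  ext k
  induction k using Nat.strong_induction_on with
  | _ k ih =>
    cases k with
    | zero => simpa using h0
    | succ k =>
      have hk : coeff k (d⁄dX R f) = coeff k (d⁄dX R g) := by
        rw [hf, hg, coeff_mul, coeff_mul]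
        exact Finset.sum_congr rfl fun p hp => by
          rw [ih p.2 (Finset.Nat.antidiagonal.snd_lt hp)]
      rw [coeff_derivative, coeff_derivative, mul_comm, mul_comm _ (_ + 1)] at hk
      exact_mod_cast (smul_right_inj k.succ_ne_zero).1 (by simpa [nsmul_eq_mul] using hk)

theorem avgDetPowSeries_eq_mul_genFun (x : ℂ) (r : ℕ) :
    avgDetPowSeries x r =
      Nat.Partition.genFun (hyperoctahedralChar fun i => (1 - (-x) ^ i) ^ r) *
        Nat.Partition.genFun (hyperoctahedralChar fun i => (1 + (-x) ^ i) ^ r) := by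
  refine eq_of_derivative_eq_mul_self (derivative_avgDetPowSeries x r) ?_ ?_
  · rw [Derivation.leibniz, smul_eq_mul, smul_eq_mul, derivative_genFun_hyperoctahedralChar,
      derivative_genFun_hyperoctahedralChar]
    have hsplit : mk (fun i => ((1 - (-x) ^ (i + 1)) ^ r + (1 + (-x) ^ (i + 1)) ^ r) / 2) =
        mk (fun i => (1 - (-x) ^ (i + 1)) ^ r / 2) +
          mk (fun i => (1 + (-x) ^ (i + 1)) ^ r / 2) := by
      ext i
      simp [add_div]
    rw [hsplit]
    ring
  · rw [map_mul, constantCoeff_genFun_hyperoctahedralChar,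
      constantCoeff_genFun_hyperoctahedralChar, ← coeff_zero_eq_constantCoeff_apply,
      avgDetPowSeries, coeff_mk, sumDetPow]
    simp [Wr.card_eq]

theorem prod_hyperoctahedralChar_eq_prod_Icc (F : ℕ → ℂ) {k n : ℕ} (p : k.Partition)
    (hk : k ≤ n) :
    p.parts.toFinsupp.prod (hyperoctahedralChar F) =
      ∏ i ∈ Finset.Icc 1 n, hyperoctahedralChar F i (p.parts.count i) := by
  refine Finsupp.prod_of_support_subset _ (fun i hi => ?_) _ fun i _ => by
    simp [hyperoctahedralChar]
  have hi : i ∈ p.parts := by simpa using hi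
  exact Finset.mem_Icc.2 ⟨p.parts_pos hi, (Nat.Partition.le_of_mem_parts hi).trans hk⟩

theorem avg_det_pow_eq_sum_signedPartitions_general (n r : ℕ) (x : ℂ) :
    (1 / ((2 ^ n * n.factorial : ℕ) : ℂ)) *
        ∑ w : Wr ℤˣ (Fin n), ((1 + x • Aw w).det) ^ r =
      ∑ k ∈ Finset.range (n + 1), ∑ p : Nat.Partition k, ∑ q : Nat.Partition (n - k),
        ((∏ i ∈ Finset.Icc 1 n, (1 - (-x) ^ i) ^ (p.parts.count i * r)) *
            ∏ j ∈ Finset.Icc 1 n, (1 + (-x) ^ j) ^ (q.parts.count j * r)) /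
          ((∏ i ∈ Finset.Icc 1 n,
            (2 * i) ^ (p.parts.count i) * (p.parts.count i).factorial *
              ((2 * i) ^ (q.parts.count i) * (q.parts.count i).factorial) : ℕ) : ℂ) := by
  have h := congrArg (coeff n) (avgDetPowSeries_eq_mul_genFun x r)
  rw [avgDetPowSeries, coeff_mk, coeff_mul, Finset.Nat.sum_antidiagonal_eq_sum_range_succ_mk] at h
  rw [one_div_mul_eq_div, ← sumDetPow]
  push_cast
  rw [h]
  refine Finset.sum_congr rfl fun k hk => ?_
  have hkn : k ≤ n := Nat.lt_succ_iff.1 (Finset.mem_range.1 hk)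
  rw [Nat.Partition.coeff_genFun, Nat.Partition.coeff_genFun, Finset.sum_mul_sum]
  refine Finset.sum_congr rfl fun p _ => Finset.sum_congr rfl fun q _ => ?_
  rw [prod_hyperoctahedralChar_eq_prod_Icc _ p hkn,
    prod_hyperoctahedralChar_eq_prod_Icc _ q (Nat.sub_le n k), ← Finset.prod_mul_distrib,
    ← Finset.prod_mul_distrib, ← Finset.prod_div_distrib]
  refine Finset.prod_congr rfl fun i _ => ?_
  simp only [hyperoctahedralChar, div_pow, ← pow_mul]
  ring

/-- Explicit partition-type formula for the mixed Hodge polynomial of the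
`Sp₂ₙ`-character variety of `ℤʳ` (evaluated at `x = tuv`): averaging
`det(I + x Aw)^r` over `C₂ ≀ Sₙ` gives a sum over signed partitions of `n`. -/
theorem avg_det_pow_eq_sum_signedPartitions (n r : ℕ) (hn : 1 ≤ n) (hr : 1 ≤ r) (x : ℂ) :
    (1 / ((2 ^ n * n.factorial : ℕ) : ℂ)) *
        ∑ w : Wr ℤˣ (Fin n), ((1 + x • Aw w).det) ^ r =
      ∑ k ∈ Finset.range (n + 1), ∑ p : Nat.Partition k, ∑ q : Nat.Partition (n - k),
        ((∏ i ∈ Finset.Icc 1 n, (1 - (-x) ^ i) ^ (p.parts.count i * r)) *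
            ∏ j ∈ Finset.Icc 1 n, (1 + (-x) ^ j) ^ (q.parts.count j * r)) /
          ((∏ i ∈ Finset.Icc 1 n,
            (2 * i) ^ (p.parts.count i) * (p.parts.count i).factorial *
              ((2 * i) ^ (q.parts.count i) * (q.parts.count i).factorial) : ℕ) : ℂ) :=
  avg_det_pow_eq_sum_signedPartitions_general n r x
end

section
/- Let n ≥ 1 and let W = {[a;σ] ∈ C₂ ≀ Sₙ : ∏ a_i = 1}. For w ∈ W whose signed partition λ± satisfies: b_i = 0 for all even i and a_i = b_i = 0 for all odd i (i.e., all parts are even with positive sign), the centralizer of w in W equals the centralizer of w in C₂ ≀ Sₙ; otherwise the centralizer of w in W has index 2 in the centralizer of w in C₂ ≀ Sₙ. -/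
open scoped Classical

/-- The index-two subgroup of `C₂ ≀ Sₙ` of elements `[a₁,…,aₙ;σ]` with `∏ aᵢ = 1`
(the Weyl group of `SO₂ₙ`, type `Dₙ`). -/
def Wplus (n : ℕ) : Subgroup (Wr ℤˣ (Fin n)) where
  carrier := {x | ∏ i, x.a i = 1}
  one_mem' := by simp
  mul_mem' := by
    intro x y hx hy
    simp only [Set.mem_setOf_eq, Wr.mul_a] at *
    rw [Finset.prod_mul_distrib, Equiv.prod_comp x.p⁻¹ y.a, hx, hy, one_mul]
  inv_mem' := by
    intro x hx
    simp only [Set.mem_setOf_eq, Wr.inv_a] at *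
    rw [Finset.prod_inv_distrib, Equiv.prod_comp x.p x.a, hx, inv_one]

/-! On an even cycle of `σ` the product of `c` equals the product, over the odd positions
`σ i, σ³ i, …`, of its coboundary `j ↦ c (σ⁻¹ j) * c j`. If `w = [a; σ]` has only even cycles
with trivial cycle products and `x = [c; τ]` commutes with `w`, that coboundary is
`a * (a ∘ τ⁻¹)`, so the product of `c` over the cycle of `i` is `P i * P (τ⁻¹ i)`, where `P i`
is the product of `a` over the odd positions of the cycle of `i`. The trivial cycle products
make `P` constant on cycles, and `τ` permutes the cycles of `σ`, so `∏ c` is a square in `ℤˣ`,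
that is `1`. Otherwise some cycle is odd or has product `-1`, and flipping all signs on it, or
restricting `w` to it, gives an element of the centralizer with `∏ c = -1`. Since `Wplus n` is
the kernel of `x ↦ ∏ x.a i`, the relative index is `1`, respectively `2`. -/

open Equiv Finset Function

theorem Finset.prod_range_two_mul {M : Type*} [CommMonoid M] (f : ℕ → M) (m : ℕ) :
    ∏ t ∈ range (2 * m), f t = ∏ s ∈ range m, f (2 * s) * f (2 * s + 1) := by
  induction m with
  | zero => simp
  | succ m ih =>
    rw [Nat.mul_succ, prod_range_succ, prod_range_succ, prod_range_succ, ih, mul_assoc]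

namespace Equiv.Perm

section Orbit

variable {α : Type*} (σ : Perm α) (i : α)

theorem minimalPeriod_pos [Finite α] : 0 < minimalPeriod σ i :=
  minimalPeriod_pos_of_mem_periodicPts (σ.injective.mem_periodicPts i)

theorem pow_mod_minimalPeriod_apply (t : ℕ) :
    (σ ^ (t % minimalPeriod σ i)) i = (σ ^ t) i := by
  simp only [← iterate_eq_pow, iterate_mod_minimalPeriod_eq]

theorem injOn_pow_apply_range :
    Set.InjOn (fun t => (σ ^ t) i) (range (minimalPeriod σ i)) := by
  simpa only [coe_range, ← iterate_eq_pow] using iterate_injOn_Iio_minimalPeriod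

theorem minimalPeriod_apply_of_commute {τ : Perm α} (h : Commute σ τ) :
    minimalPeriod σ (τ i) = minimalPeriod σ i := by
  have semiconj (ρ : Perm α) (hρ : Commute σ ρ) : Semiconj ρ σ σ := fun x => by
    rw [← mul_apply, ← hρ.eq, mul_apply]
  refine minimalPeriod_eq_minimalPeriod_iff.mpr fun t =>
    ⟨fun ht => ?_, fun ht => ht.map (semiconj τ h)⟩
  simpa using ht.map (semiconj τ⁻¹ h.inv_right)

theorem sameCycle_apply_apply_of_commute {τ : Perm α} (hστ : Commute σ τ) {x y : α} :
    σ.SameCycle (τ x) (τ y) ↔ σ.SameCycle x y := by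
  simpa [hστ.symm.eq] using sameCycle_conj (g := τ) (f := σ) (x := τ x) (y := τ y)

variable [Fintype α] [DecidableEq α]

theorem commute_cycleOf : Commute σ (σ.cycleOf i) := by
  ext j
  simp only [mul_apply, cycleOf_apply, sameCycle_apply_right]
  split_ifs <;> rfl

theorem filter_sameCycle_eq_image :
    univ.filter (fun j => σ.SameCycle i j) =
      (range (minimalPeriod σ i)).image (fun t => (σ ^ t) i) := by
  ext j
  simp only [mem_filter, mem_univ, true_and, mem_image, mem_range]
  constructor
  · intro h
    obtain ⟨t, rfl⟩ := h.exists_nat_pow_eq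
    exact ⟨t % minimalPeriod σ i, Nat.mod_lt _ (σ.minimalPeriod_pos i),
      σ.pow_mod_minimalPeriod_apply i t⟩
  · rintro ⟨t, -, rfl⟩
    exact ⟨t, by simp⟩

theorem card_filter_sameCycle :
    (univ.filter (fun j => σ.SameCycle i j)).card = minimalPeriod σ i := by
  rw [filter_sameCycle_eq_image, card_image_of_injOn (σ.injOn_pow_apply_range i), card_range]

theorem prod_filter_sameCycle {M : Type*} [CommMonoid M] (g : α → M) :
    ∏ j ∈ univ.filter (fun j => σ.SameCycle i j), g j =
      ∏ t ∈ range (minimalPeriod σ i), g ((σ ^ t) i) := by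
  rw [filter_sameCycle_eq_image, prod_image (σ.injOn_pow_apply_range i)]

end Orbit

variable {α M : Type*} (σ : Perm α)

section CommMonoid

variable [CommMonoid M]

noncomputable def oddStepProd (g : α → M) (i : α) : M :=
  ∏ s ∈ range (minimalPeriod σ i / 2), g ((σ ^ (2 * s + 1)) i)

theorem oddStepProd_mul (g h : α → M) (i : α) :
    σ.oddStepProd (g * h) i = σ.oddStepProd g i * σ.oddStepProd h i :=
  prod_mul_distrib

theorem oddStepProd_comp_of_commute {τ : Perm α} (hστ : Commute σ τ) (g : α → M) (i : α) :
    σ.oddStepProd (g ∘ τ) i = σ.oddStepProd g (τ i) := by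
  simp only [oddStepProd, σ.minimalPeriod_apply_of_commute i hστ, comp_apply, ← mul_apply,
    (hστ.pow_left _).eq]

theorem oddStepProd_coboundary (c : α → M) {i : α} (he : Even (minimalPeriod σ i)) :
    σ.oddStepProd (fun j => c (σ⁻¹ j) * c j) i =
      ∏ t ∈ range (minimalPeriod σ i), c ((σ ^ t) i) := by
  obtain ⟨m, hm⟩ := he
  rw [oddStepProd, hm, ← two_mul, Nat.mul_div_cancel_left _ two_pos, prod_range_two_mul]
  refine prod_congr rfl fun s _ => ?_
  simp [pow_succ', mul_apply]

theorem oddStepProd_mul_oddStepProd_apply [Fintype α] [DecidableEq α] (g : α → M) {i : α}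
    (he : Even (minimalPeriod σ i)) :
    σ.oddStepProd g i * σ.oddStepProd g (σ i) =
      ∏ j ∈ univ.filter (fun j => σ.SameCycle i j), g j := by
  rw [← oddStepProd_comp_of_commute σ (Commute.refl σ), ← oddStepProd_mul,
    filter_congr fun j _ => (sameCycle_apply_left (f := σ)).symm, prod_filter_sameCycle,
    minimalPeriod_apply (σ.injective.mem_periodicPts i)]
  -- `g * g ∘ σ` is the coboundary of `g ∘ σ`
  convert σ.oddStepProd_coboundary (g ∘ σ) he using 2
  · ext j
    simp
  · rw [← mul_apply, ← pow_succ, pow_succ', mul_apply]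
    rfl

end CommMonoid

section Units

variable [Fintype α] [DecidableEq α]

theorem oddStepProd_apply_self (g : α → ℤˣ) {i : α} (he : Even (minimalPeriod σ i))
    (hg : ∏ j ∈ univ.filter (fun j => σ.SameCycle i j), g j = 1) :
    σ.oddStepProd g (σ i) = σ.oddStepProd g i :=
  calc σ.oddStepProd g (σ i)
      = σ.oddStepProd g i * σ.oddStepProd g i * σ.oddStepProd g (σ i) := by
        rw [Int.units_mul_self, one_mul]
    _ = σ.oddStepProd g i := by
        rw [mul_assoc, σ.oddStepProd_mul_oddStepProd_apply g he, hg, mul_one]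

theorem oddStepProd_eq_of_sameCycle {g : α → ℤˣ} (heven : ∀ x, Even (minimalPeriod σ x))
    (hg : ∀ x, ∏ j ∈ univ.filter (fun j => σ.SameCycle x j), g j = 1) {i j : α}
    (hij : σ.SameCycle i j) : σ.oddStepProd g j = σ.oddStepProd g i := by
  obtain ⟨t, rfl⟩ := hij.exists_nat_pow_eq
  clear hij
  induction t with
  | zero => rfl
  | succ t ih => rw [pow_succ', mul_apply, oddStepProd_apply_self σ g (heven _) (hg _), ih]

end Units

section Quotient

variable [Fintype α] [CommMonoid M]

theorem prod_eq_prod_quotient_sameCycle [DecidableEq α] (f : α → M) :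
    ∏ j, f j = ∏ q : Quotient (SameCycle.setoid σ),
      ∏ j ∈ univ.filter (fun j => σ.SameCycle q.out j), f j := by
  rw [← prod_fiberwise univ (Quotient.mk (SameCycle.setoid σ)) f]
  refine Fintype.prod_congr _ _ fun q => prod_congr (filter_congr fun j _ => ?_) fun _ _ => rfl
  conv_lhs => rw [← q.out_eq]
  exact Quotient.eq.trans ⟨SameCycle.symm, SameCycle.symm⟩

theorem prod_quotient_sameCycle_apply_of_commute {τ : Perm α} (hστ : Commute σ τ)
    {F : α → M} (hF : ∀ i j, σ.SameCycle i j → F i = F j) :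
    ∏ q : Quotient (SameCycle.setoid σ), F (τ q.out) =
      ∏ q : Quotient (SameCycle.setoid σ), F q.out := by
  let e : Quotient (SameCycle.setoid σ) ≃ Quotient (SameCycle.setoid σ) :=
    Quotient.congr τ fun _ _ => (σ.sameCycle_apply_apply_of_commute hστ).symm
  refine Fintype.prod_equiv e _ _ fun q => hF _ _ (Quotient.exact (s := SameCycle.setoid σ) ?_)
  rw [Quotient.out_eq]
  conv_rhs => rw [← q.out_eq]
  rfl

end Quotient

theorem prod_eq_one_of_coboundary_eq [Fintype α] [DecidableEq α] {τ : Perm α}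
    (hστ : Commute σ τ) {a c : α → ℤˣ} (heven : ∀ i, Even (minimalPeriod σ i))
    (ha : ∀ i, ∏ j ∈ univ.filter (fun j => σ.SameCycle i j), a j = 1)
    (hc : ∀ j, a j * c (σ⁻¹ j) = c j * a (τ⁻¹ j)) :
    ∏ j, c j = 1 := by
  set P := σ.oddStepProd a
  have hcob : (fun j => c (σ⁻¹ j) * c j) = a * a ∘ ⇑τ⁻¹ := by
    ext j
    have := hc j
    have := Int.units_mul_self (a j)
    have := Int.units_mul_self (c j)
    simp only [Pi.mul_apply, comp_apply]
    grind
  have hcycle (i : α) :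
      ∏ j ∈ univ.filter (fun j => σ.SameCycle i j), c j = P i * P (τ⁻¹ i) := by
    rw [prod_filter_sameCycle, ← σ.oddStepProd_coboundary c (heven i), hcob, oddStepProd_mul,
      oddStepProd_comp_of_commute σ hστ.inv_right]
  have hP (i j : α) (hij : σ.SameCycle i j) : P i = P j :=
    (σ.oddStepProd_eq_of_sameCycle heven ha hij).symm
  calc ∏ j, c j = ∏ q : Quotient (SameCycle.setoid σ), P q.out * P (τ⁻¹ q.out) := by
        rw [prod_eq_prod_quotient_sameCycle σ]
        simp only [hcycle]
    _ = (∏ q : Quotient (SameCycle.setoid σ), P q.out) *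
          ∏ q : Quotient (SameCycle.setoid σ), P q.out := by
        rw [prod_mul_distrib, prod_quotient_sameCycle_apply_of_commute σ hστ.inv_right hP]
    _ = 1 := Int.units_mul_self _

end Equiv.Perm

theorem MonoidHom.relIndex_ker_eq_two_of_apply_eq_neg_one {G : Type*} [Group G] (f : G →* ℤˣ)
    {K : Subgroup G} {y : G} (hy : y ∈ K) (hfy : f y = -1) : f.ker.relIndex K = 2 := by
  have hmap : K.map f = ⊤ := eq_top_iff.mpr fun u _ => by
    rcases Int.units_eq_one_or u with rfl | rfl
    · exact ⟨1, K.one_mem, map_one f⟩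
    · exact ⟨y, hy, hfy⟩
  rw [Subgroup.relIndex_ker, hmap, Subgroup.card_top, Nat.card_eq_fintype_card,
    Fintype.card_units_int]

namespace Wr

variable {G α : Type*}

def prodHom (G α : Type*) [CommGroup G] [Fintype α] : Wr G α →* G where
  toFun x := ∏ i, x.a i
  map_one' := prod_const_one
  map_mul' x y := by
    simp only [mul_a]
    rw [prod_mul_distrib, Equiv.prod_comp x.p⁻¹ y.a]

variable [Fintype α] [DecidableEq α]

def cycleOf [Group G] (x : Wr G α) (i : α) : Wr G α :=
  ⟨fun j => if x.p.SameCycle i j then x.a j else 1, x.p.cycleOf i⟩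

theorem commute_cycleOf [Group G] (x : Wr G α) (i : α) : Commute x (x.cycleOf i) := by
  ext j
  · by_cases hij : x.p.SameCycle i j
    · have hinv : (x.p.cycleOf i)⁻¹ j = x.p⁻¹ j := by
        rw [Perm.cycleOf_inv, Perm.cycleOf_apply, if_pos (Perm.sameCycle_inv.mpr hij)]
      simp [cycleOf, hij, hinv]
    · have hinv : (x.p.cycleOf i)⁻¹ j = j := by
        rw [Perm.cycleOf_inv, Perm.cycleOf_apply, if_neg (mt Perm.sameCycle_inv.mp hij)]
      simp [cycleOf, hij, hinv]
  · simp [cycleOf, (Perm.commute_cycleOf x.p i).eq]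

theorem prodHom_cycleOf [CommGroup G] (x : Wr G α) (i : α) :
    prodHom G α (x.cycleOf i) = ∏ j ∈ univ.filter (fun j => x.p.SameCycle i j), x.a j :=
  (prod_ite _ _).trans (by rw [prod_const_one, mul_one])

def constOnCycle [Group G] (x : Wr G α) (i : α) (z : G) : Wr G α :=
  ⟨fun j => if x.p.SameCycle i j then z else 1, 1⟩

theorem commute_constOnCycle [CommGroup G] (x : Wr G α) (i : α) (z : G) :
    Commute x (x.constOnCycle i z) := by
  ext j
  · simp [constOnCycle, mul_comm]
  · simp [constOnCycle]

theorem prodHom_constOnCycle [CommGroup G] (x : Wr G α) (i : α) (z : G) :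
    prodHom G α (x.constOnCycle i z) = z ^ (univ.filter (fun j => x.p.SameCycle i j)).card :=
  (prod_ite _ _).trans (by rw [prod_const_one, mul_one, prod_const])

theorem prodHom_eq_one_of_commute {w x : Wr ℤˣ α} (h : Commute w x)
    (heven : ∀ i, Even (minimalPeriod w.p i))
    (hpos : ∀ i, ∏ j ∈ univ.filter (fun j => w.p.SameCycle i j), w.a j = 1) :
    prodHom ℤˣ α x = 1 :=
  Perm.prod_eq_one_of_coboundary_eq w.p (congrArg Wr.p h) heven hpos
    fun j => congrFun (congrArg Wr.a h) j

theorem exists_mem_centralizer_prodHom_eq_neg_one {w : Wr ℤˣ α} {i : α}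
    (h : ¬(Even (minimalPeriod w.p i) ∧
      ∏ j ∈ univ.filter (fun j => w.p.SameCycle i j), w.a j = 1)) :
    ∃ y ∈ Subgroup.centralizer {w}, prodHom ℤˣ α y = -1 := by
  rcases not_and_or.mp h with hodd | hneg
  · refine ⟨w.constOnCycle i (-1), Subgroup.mem_centralizer_singleton_iff.mpr
      (commute_constOnCycle w i (-1)).symm, ?_⟩
    rw [prodHom_constOnCycle, Perm.card_filter_sameCycle,
      (Nat.not_even_iff_odd.mp hodd).neg_one_pow]
  · exact ⟨w.cycleOf i, Subgroup.mem_centralizer_singleton_iff.mpr (commute_cycleOf w i).symm,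
      (prodHom_cycleOf w i).trans ((Int.units_eq_one_or _).resolve_left hneg)⟩

end Wr

theorem Wplus_eq_ker_prodHom (n : ℕ) : Wplus n = (Wr.prodHom ℤˣ (Fin n)).ker := rfl

theorem signedCount_eq_zero_iff {n : ℕ} (w : Wr ℤˣ (Fin n)) (k : ℕ) (ε : ℤˣ) :
    signedCount w k ε = 0 ↔
      ∀ i, (univ.filter (fun j => w.p.SameCycle i j)).card = k → cycleProd w.a w.p i ≠ ε := by
  simp [signedCount, filter_eq_empty_iff]

theorem eq_zero_iff_forall_cycleProd_ne {n : ℕ} {w : Wr ℤˣ (Fin n)} {ε : ℤˣ} {c : ℕ → ℕ}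
    (hc : ∀ k, signedCount w k ε = k * c k) {k : ℕ} (hk : 1 ≤ k) :
    c k = 0 ↔
      ∀ i, (univ.filter (fun j => w.p.SameCycle i j)).card = k → cycleProd w.a w.p i ≠ ε := by
  rw [← signedCount_eq_zero_iff, hc, mul_eq_zero]
  omega

theorem parts_even_positive_iff {n : ℕ} {w : Wr ℤˣ (Fin n)} {a b : ℕ → ℕ}
    (ha : ∀ k, signedCount w k 1 = k * a k) (hb : ∀ k, signedCount w k (-1) = k * b k) :
    ((∀ i, 1 ≤ i → Odd i → a i = 0 ∧ b i = 0) ∧ ∀ i, 1 ≤ i → Even i → b i = 0) ↔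
      ∀ i, Even (minimalPeriod w.p i) ∧ cycleProd w.a w.p i = 1 := by
  simp only [← Perm.card_filter_sameCycle]
  have hcard (i : Fin n) : 1 ≤ (univ.filter (fun j => w.p.SameCycle i j)).card := by
    rw [Perm.card_filter_sameCycle]
    exact w.p.minimalPeriod_pos i
  constructor
  · rintro ⟨hodd, heven⟩ i
    set k := (univ.filter (fun j => w.p.SameCycle i j)).card
    have hbk : b k = 0 :=
      (Nat.even_or_odd k).elim (heven k (hcard i)) fun hk => (hodd k (hcard i) hk).2
    have hpos : cycleProd w.a w.p i = 1 := (Int.units_eq_one_or _).resolve_right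
      ((eq_zero_iff_forall_cycleProd_ne hb (hcard i)).mp hbk i rfl)
    refine ⟨Nat.not_odd_iff_even.mp fun hk => ?_, hpos⟩
    exact (eq_zero_iff_forall_cycleProd_ne ha (hcard i)).mp (hodd k (hcard i) hk).1 i rfl hpos
  · intro h
    have hb0 (k : ℕ) (hk : 1 ≤ k) : b k = 0 :=
      (eq_zero_iff_forall_cycleProd_ne hb hk).mpr fun i _ => by rw [(h i).2]; decide
    refine ⟨fun k hk hodd => ⟨(eq_zero_iff_forall_cycleProd_ne ha hk).mpr fun i hi _ =>
      Nat.not_even_iff_odd.mpr hodd (hi ▸ (h i).1), hb0 k hk⟩, fun k hk _ => hb0 k hk⟩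

theorem centralizer_in_Wplus_general (n : ℕ) (w : Wr ℤˣ (Fin n))
    (a b : ℕ → ℕ)
    (ha : ∀ k, signedCount w k 1 = k * a k)
    (hb : ∀ k, signedCount w k (-1) = k * b k) :
    (((∀ i, 1 ≤ i → Odd i → a i = 0 ∧ b i = 0) ∧ ∀ i, 1 ≤ i → Even i → b i = 0) →
        (Wplus n).relIndex (Subgroup.centralizer {w}) = 1) ∧
      (¬((∀ i, 1 ≤ i → Odd i → a i = 0 ∧ b i = 0) ∧ ∀ i, 1 ≤ i → Even i → b i = 0) →
        (Wplus n).relIndex (Subgroup.centralizer {w}) = 2) := by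
  rw [parts_even_positive_iff ha hb, Wplus_eq_ker_prodHom]
  refine ⟨fun h => Subgroup.relIndex_eq_one.mpr fun x hx => ?_, fun h => ?_⟩
  · exact Wr.prodHom_eq_one_of_commute (Subgroup.mem_centralizer_singleton_iff.mp hx).symm
      (fun i => (h i).1) (fun i => (h i).2)
  · obtain ⟨i, hi⟩ := not_forall.mp h
    obtain ⟨y, hy, hfy⟩ := Wr.exists_mem_centralizer_prodHom_eq_neg_one hi
    exact MonoidHom.relIndex_ker_eq_two_of_apply_eq_neg_one _ hy hfy

/-- For `w` in the Weyl group `W = Wplus n` of `SO₂ₙ` whose signed partition has `a i`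
positive and `b i` negative parts equal to `i`: if all parts are even with positive sign
then the centralizer of `w` in `W` equals its centralizer in `C₂ ≀ Sₙ`; otherwise it has
index 2 in it. -/
theorem centralizer_in_Wplus (n : ℕ) (hn : 1 ≤ n) (w : Wr ℤˣ (Fin n)) (hw : w ∈ Wplus n)
    (a b : ℕ → ℕ)
    (ha : ∀ k, signedCount w k 1 = k * a k)
    (hb : ∀ k, signedCount w k (-1) = k * b k) :
    (((∀ i, 1 ≤ i → Odd i → a i = 0 ∧ b i = 0) ∧ ∀ i, 1 ≤ i → Even i → b i = 0) →
        (Wplus n).relIndex (Subgroup.centralizer {w}) = 1) ∧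
      (¬((∀ i, 1 ≤ i → Odd i → a i = 0 ∧ b i = 0) ∧ ∀ i, 1 ≤ i → Even i → b i = 0) →
        (Wplus n).relIndex (Subgroup.centralizer {w}) = 2) :=
  centralizer_in_Wplus_general n w a b ha hb
end
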